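/- arXiv:2112.12885 — 3 statements merged into one kernel-verified Lean document; each statement's English description precedes it below -/
import Mathlib

section
/- Let (G̃, B̃, m, w) be a weighted connected finite graph with boundary, and let (G, B) be a graph with boundary such that G is a connected subgraph of G̃. Suppose that G̃ is a comb over G and that m(B̃_x) ≥ m_x for every x ∈ B. Then σ_i(G̃) ≤ σ_i(G) for every i = 1, 2, …, |B|. -/
/-
Common definitions for Steklov eigenvalues on weighted finite graphs with boundary,
following Yu-Yu, "Monotonicity of Steklov eigenvalues on graphs and applications".
-/

attribute [local instance] Classical.propDecidable

noncomputable section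

/-- The boundary inner product `⟨u,v⟩_A = ∑_{x ∈ A} u x * v x * m x`. -/
def bInner {V : Type*} [Fintype V] (A : Set V) (m : V → ℝ) (u v : V → ℝ) : ℝ :=
  ∑ x : V, if x ∈ A then u x * v x * m x else 0

/-- Total measure `m(A) = ∑_{x ∈ A} m x`. -/
def mTotal {V : Type*} [Fintype V] (A : Set V) (m : V → ℝ) : ℝ :=
  ∑ x : V, if x ∈ A then m x else 0

/-- The Dirichlet energy `⟨du,du⟩_G = ∑_{{x,y} ∈ E(G)} w x y * (u y - u x)^2`
(each edge counted once; the double sum counts each edge twice, whence the `/2`). -/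
def energy {V : Type*} [Fintype V] (G : SimpleGraph V) (w : V → V → ℝ) (u : V → ℝ) : ℝ :=
  (∑ x : V, ∑ y : V, if G.Adj x y then w x y * (u y - u x) ^ 2 else 0) / 2

/-- The weighted graph Laplacian `Δ_G f (x) = (1/m x) ∑_{y ∼ x} w x y * (f y - f x)`. -/
def lap {V : Type*} [Fintype V] (G : SimpleGraph V) (m : V → ℝ) (w : V → V → ℝ)
    (f : V → ℝ) (x : V) : ℝ :=
  (∑ y : V, if G.Adj x y then w x y * (f y - f x) else 0) / m x

/-- The `i`-th Steklov eigenvalue (1-indexed, listed with multiplicity) of the weighted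
graph `(G,B,m,w)` with boundary, via the Courant min-max characterization: the infimum
over `i`-dimensional spaces of functions (injecting into `ℝ^B` by restriction) of the
maximal Rayleigh quotient `⟨du,du⟩_G / ⟨u,u⟩_B`. -/
def steklov {V : Type*} [Fintype V] (G : SimpleGraph V) (B : Set V) (m : V → ℝ)
    (w : V → V → ℝ) (i : ℕ) : ℝ :=
  sInf {σ : ℝ | ∃ E : Submodule ℝ (V → ℝ), Module.finrank ℝ E = i ∧
    (∀ u ∈ E, (∀ x ∈ B, u x = 0) → u = 0) ∧
    ∀ u ∈ E, energy G w u ≤ σ * bInner B m u u}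

/-- `f` is a Steklov eigenfunction of `(G,B,m,w)` for the eigenvalue `σ`:
`f ≠ 0`, `Δ_G f = 0` on the interior, and `∂f/∂n = σ f` on `B`. -/
def IsSteklovEigenfun {V : Type*} [Fintype V] (G : SimpleGraph V) (B : Set V) (m : V → ℝ)
    (w : V → V → ℝ) (σ : ℝ) (f : V → ℝ) : Prop :=
  f ≠ 0 ∧ (∀ x, x ∉ B → lap G m w f x = 0) ∧ ∀ x ∈ B, -lap G m w f x = σ * f x

/-- `f` is a Steklov eigenfunction with vanishing Dirichlet boundary data on `Z`,
for the eigenvalue `lam`. -/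
def IsDirSteklovEigenfun {V : Type*} [Fintype V] (G : SimpleGraph V) (B Z : Set V)
    (m : V → ℝ) (w : V → V → ℝ) (lam : ℝ) (f : V → ℝ) : Prop :=
  f ≠ 0 ∧ (∀ x ∈ Z, f x = 0) ∧ (∀ x, x ∉ B → x ∉ Z → lap G m w f x = 0) ∧
    ∀ x ∈ B, -lap G m w f x = lam * f x

/-- The first Steklov eigenvalue with vanishing Dirichlet boundary data on `Z`:
`λ₁(G,B,Z) = inf { ⟨du,du⟩_G / ⟨u,u⟩_B : u|_B ≢ 0, u|_Z ≡ 0 }`. -/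
def lambda1 {V : Type*} [Fintype V] (G : SimpleGraph V) (B Z : Set V) (m : V → ℝ)
    (w : V → V → ℝ) : ℝ :=
  sInf {c : ℝ | ∃ u : V → ℝ, (∀ x ∈ Z, u x = 0) ∧ (∃ x ∈ B, u x ≠ 0) ∧
    c = energy G w u / bInner B m u u}

/-- The statement `λ₁(G,B,Z) ≥ c` (with the convention `λ₁ = +∞` when `B = ∅`):
every `u` vanishing on `Z` satisfies `c * ⟨u,u⟩_B ≤ ⟨du,du⟩_G`. -/
def lambda1Ge {V : Type*} [Fintype V] (G : SimpleGraph V) (B Z : Set V) (m : V → ℝ)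
    (w : V → V → ℝ) (c : ℝ) : Prop :=
  ∀ u : V → ℝ, (∀ x ∈ Z, u x = 0) → c * bInner B m u u ≤ energy G w u

/-- The intrinsic boundary of a combinatorial graph: vertices of degree at most one. -/
def combBoundary {V : Type*} (G : SimpleGraph V) : Set V :=
  {v | (G.neighborSet v).ncard ≤ 1}

/-- The tooth `G̃_x`: vertices of `G̃` reachable from `x` after deleting all edges
of the subgraph `H`. -/
def tooth {V : Type*} (Gt : SimpleGraph V) (H : Gt.Subgraph) (x : V) : Set V :=
  {y | (Gt.deleteEdges H.edgeSet).Reachable x y}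

/-- The tooth `G̃_x` as a graph in its own right. -/
def toothGraph {V : Type*} (Gt : SimpleGraph V) (H : Gt.Subgraph) (x : V) :
    SimpleGraph (tooth Gt H x) :=
  (Gt.deleteEdges H.edgeSet).induce (tooth Gt H x)

/-- `G̃` is a comb over its subgraph `H`: after deleting the edges of `H`, the graph
breaks into exactly `|V(H)|` connected components, one for each vertex of `H`. -/
def IsComb {V : Type*} (Gt : SimpleGraph V) (H : Gt.Subgraph) : Prop :=
  Function.Bijective fun x : H.verts =>
    (Gt.deleteEdges H.edgeSet).connectedComponentMk (x : V)

/-- The `i`-th Steklov eigenvalue of the subgraph `H` of `(G̃,m,w)` with boundary `B`,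
with the restricted vertex measure and edge weight. -/
def steklovSub {V : Type*} [Fintype V] (Gt : SimpleGraph V) (H : Gt.Subgraph) (B : Set V)
    (m : V → ℝ) (w : V → V → ℝ) (i : ℕ) : ℝ :=
  steklov H.coe (Subtype.val ⁻¹' B) (fun x => m x.1) (fun x y => w x.1 y.1) i

/-- The set `Z` of interior vertices of the subgraph `(H,B)` at which every function
that is harmonic in the interior and satisfies `⟨f,1⟩_B = 0` vanishes. -/
def Zset {V : Type*} [Fintype V] (Gt : SimpleGraph V) (H : Gt.Subgraph) (B : Set V)
    (m : V → ℝ) (w : V → V → ℝ) : Set H.verts :=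
  {x | (x : V) ∉ B ∧ ∀ f : H.verts → ℝ,
    (∀ y : H.verts, (y : V) ∉ B → lap H.coe (fun a => m a.1) (fun a b => w a.1 b.1) f y = 0) →
    bInner (Subtype.val ⁻¹' B) (fun a => m a.1) f (fun _ => 1) = 0 → f x = 0}

/-- The set `Z₁` of vertices of the subgraph `(H,B)` at which every Steklov
eigenfunction for `σ₂` vanishes. -/
def Z1set {V : Type*} [Fintype V] (Gt : SimpleGraph V) (H : Gt.Subgraph) (B : Set V)
    (m : V → ℝ) (w : V → V → ℝ) : Set H.verts :=
  {x | ∀ f : H.verts → ℝ,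
    IsSteklovEigenfun H.coe (Subtype.val ⁻¹' B) (fun a => m a.1) (fun a b => w a.1 b.1)
      (steklovSub Gt H B m w 2) f → f x = 0}

/-- Vertex type of the wedge sum `∨_z^r Γ` of `r` copies of `Γ` at `z`:
`r` copies of `V ∖ {z}` together with one common copy of `z` (the `Sum.inr` vertex). -/
abbrev wedgeV (V : Type*) (z : V) (r : ℕ) : Type _ := ({x : V // x ≠ z} × Fin r) ⊕ Unit

/-- The wedge sum `∨_z^r Γ` of `r` copies of the graph `Γ` at the vertex `z`. -/
def wedgeGraph {V : Type*} (Γ : SimpleGraph V) (z : V) (r : ℕ) :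
    SimpleGraph (wedgeV V z r) :=
  SimpleGraph.fromRel fun a b =>
    match a, b with
    | Sum.inl (x, i), Sum.inl (y, j) => i = j ∧ Γ.Adj x.1 y.1
    | Sum.inr _, Sum.inl (y, _) => Γ.Adj z y.1
    | _, _ => False

/-- The vertex measure on `∨_z^r Γ` inherited from `m`. -/
def wedgeM {V : Type*} (m : V → ℝ) (z : V) (r : ℕ) : wedgeV V z r → ℝ :=
  fun a => match a with
  | Sum.inl (x, _) => m x.1
  | Sum.inr _ => m z

/-- The edge weight on `∨_z^r Γ` inherited from `w`. -/
def wedgeW {V : Type*} (w : V → V → ℝ) (z : V) (r : ℕ) :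
    wedgeV V z r → wedgeV V z r → ℝ :=
  fun a b => match a, b with
  | Sum.inl (x, _), Sum.inl (y, _) => w x.1 y.1
  | Sum.inl (x, _), Sum.inr _ => w x.1 z
  | Sum.inr _, Sum.inl (y, _) => w z y.1
  | Sum.inr _, Sum.inr _ => 0

/-- The boundary `⊔^r B` of the wedge sum `∨_z^r Γ` (for `B` not containing `z`). -/
def wedgeB {V : Type*} (B : Set V) (z : V) (r : ℕ) : Set (wedgeV V z r) :=
  {a | match a with
      | Sum.inl (x, _) => x.1 ∈ B
      | Sum.inr _ => False}

/-- Vertex type of the star `St(l₀,…,l_{r-1})`: the vertex `Sum.inl ⟨j,k⟩` is the vertex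
on the `j`-th arm at distance `k+1` from the center, and `Sum.inr ()` is the center. -/
abbrev starV {r : ℕ} (l : Fin r → ℕ) : Type := (Σ j : Fin r, Fin (l j)) ⊕ Unit

/-- The star `St(l₀,…,l_{r-1})`: `r` paths of lengths `l₀,…,l_{r-1}` identified at one
end vertex (the center `Sum.inr ()`). -/
def starGraph {r : ℕ} (l : Fin r → ℕ) : SimpleGraph (starV l) :=
  SimpleGraph.fromRel fun a b =>
    match a, b with
    | Sum.inl ⟨j, k⟩, Sum.inl ⟨j', k'⟩ => j = j' ∧ k.1 + 1 = k'.1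
    | Sum.inr _, Sum.inl ⟨_, k⟩ => k.1 = 0
    | _, _ => False

/-- The vertex on the `j`-th arm of the star at distance `d` from the center
(the center itself when `d = 0`). -/
def starVertexAt {r : ℕ} (l : Fin r → ℕ) (j : Fin r) (d : ℕ) : starV l :=
  if h : 0 < d ∧ d - 1 < l j then Sum.inl ⟨j, ⟨d - 1, h.2⟩⟩ else Sum.inr ()

/-- The regular comb `Comb(r;l)`: a base path `(0,0) ∼ (1,0) ∼ ⋯ ∼ (r,0)` of length `r`,
with a tooth `(k,0) ∼ (k,1) ∼ ⋯ ∼ (k,l)` of length `l` attached at each base vertex. -/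
def combGraph (r l : ℕ) : SimpleGraph (Fin (r + 1) × Fin (l + 1)) :=
  SimpleGraph.fromRel fun a b =>
    (a.2.1 = 0 ∧ b.2.1 = 0 ∧ a.1.1 + 1 = b.1.1) ∨ (a.1 = b.1 ∧ a.2.1 + 1 = b.2.1)

end

section AuxSteklov
attribute [local instance] Classical.propDecidable
namespace SteklovAux
variable {V : Type*} [Fintype V]

lemma bInner_self_nonneg (A : Set V) (m : V → ℝ) (hm : ∀ x, 0 ≤ m x) (u : V → ℝ) :
    0 ≤ bInner A m u u := by
  unfold bInner
  refine Finset.sum_nonneg fun x _ => ?_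
  split
  · exact mul_nonneg (mul_self_nonneg _) (hm x)
  · exact le_refl 0

lemma bInner_self_pos (A : Set V) (m : V → ℝ) (hm : ∀ x, 0 < m x) {u : V → ℝ}
    (h : ∃ x ∈ A, u x ≠ 0) : 0 < bInner A m u u := by
  unfold bInner
  obtain ⟨x, hxA, hx⟩ := h
  refine Finset.sum_pos' (fun y _ => ?_) ⟨x, Finset.mem_univ x, ?_⟩
  · split
    · exact mul_nonneg (mul_self_nonneg _) (hm y).le
    · exact le_refl 0
  · rw [if_pos hxA]
    exact mul_pos (mul_self_pos.mpr hx) (hm x)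

lemma energy_nonneg (G : SimpleGraph V) (w : V → V → ℝ)
    (hw : ∀ x y, G.Adj x y → 0 ≤ w x y) (u : V → ℝ) : 0 ≤ energy G w u := by
  unfold energy
  apply div_nonneg _ (by norm_num)
  refine Finset.sum_nonneg fun x _ => Finset.sum_nonneg fun y _ => ?_
  split
  next h => exact mul_nonneg (hw x y h) (sq_nonneg _)
  next => exact le_refl 0

lemma sigma_nonneg (G : SimpleGraph V) (A : Set V) (m : V → ℝ) (w : V → V → ℝ)
    (hm : ∀ x, 0 < m x) (hw : ∀ x y, G.Adj x y → 0 ≤ w x y) {i : ℕ} (hi : 1 ≤ i) {σ : ℝ}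
    (E : Submodule ℝ (V → ℝ)) (hrk : Module.finrank ℝ E = i)
    (hinj : ∀ u ∈ E, (∀ x ∈ A, u x = 0) → u = 0)
    (hray : ∀ u ∈ E, energy G w u ≤ σ * bInner A m u u) : 0 ≤ σ := by
  have hpos : 0 < Module.finrank ℝ E := by omega
  have hnt : Nontrivial E := Module.finrank_pos_iff.mp hpos
  obtain ⟨⟨u, hu⟩, hne⟩ := exists_ne (0 : E)
  have hune : u ≠ 0 := fun h => hne (Subtype.ext h)
  have hexists : ∃ x ∈ A, u x ≠ 0 := by
    by_contra hcon
    push_neg at hcon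
    exact hune (hinj u hu hcon)
  have hb := bInner_self_pos A m hm hexists
  have he := energy_nonneg G w hw u
  have hr := hray u hu
  nlinarith

lemma sum_eq_sum_subtype {p : V → Prop} [Fintype (Subtype p)] (f : V → ℝ)
    (h : ∀ x, f x ≠ 0 → p x) : ∑ x : V, f x = ∑ x : Subtype p, f x.1 := by
  rw [← Finset.sum_filter_of_ne (fun x _ hx => h x hx)]
  exact Finset.sum_subtype _ (fun x => by simp) f

end SteklovAux
end AuxSteklov

/-- **Theorem 1.5 (monotonicity of Steklov eigenvalues).**
If `(G̃,B̃,m,w)` is a weighted connected finite graph with boundary, `G` a connected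
subgraph of `G̃` with boundary `B`, `G̃` a comb over `G`, and `m(B̃_x) ≥ m_x` for every
`x ∈ B`, then `σ_i(G̃) ≤ σ_i(G)` for every `i = 1,…,|B|`. -/
theorem steklov_monotonicity
    {V : Type*} [Fintype V] (Gt : SimpleGraph V) (Bt : Set V)
    (m : V → ℝ) (w : V → V → ℝ)
    (hm : ∀ x, 0 < m x)
    (hw_symm : ∀ x y, w x y = w y x)
    (hw_pos : ∀ x y, Gt.Adj x y → 0 < w x y)
    (hGt : Gt.Connected)
    (H : Gt.Subgraph) (hG : H.coe.Connected)
    (B : Set V) (hB : B ⊆ H.verts)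
    (hcomb : IsComb Gt H)
    (hmeas : ∀ x ∈ B, m x ≤ mTotal (Bt ∩ tooth Gt H x) m) :
    ∀ i : ℕ, 1 ≤ i → i ≤ B.ncard →
      steklov Gt Bt m w i ≤ steklovSub Gt H B m w i := by
  classical
  intro i hi1 hiB
  -- the index of the tooth containing a vertex
  have hsurj : ∀ v : V, ∃ x : H.verts,
      (Gt.deleteEdges H.edgeSet).connectedComponentMk x.1
        = (Gt.deleteEdges H.edgeSet).connectedComponentMk v := by
    intro v
    obtain ⟨x, hx⟩ := hcomb.2 ((Gt.deleteEdges H.edgeSet).connectedComponentMk v)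
    exact ⟨x, hx⟩
  choose idx hidx using hsurj
  have hreach : ∀ v, (Gt.deleteEdges H.edgeSet).Reachable (idx v).1 v :=
    fun v => SimpleGraph.ConnectedComponent.eq.mp (hidx v)
  have hidx_eq : ∀ (x : H.verts) (v : V), idx v = x ↔ v ∈ tooth Gt H x.1 := by
    intro x v
    constructor
    · rintro rfl
      exact hreach v
    · intro hv
      apply hcomb.1
      show (Gt.deleteEdges H.edgeSet).connectedComponentMk (idx v).1
        = (Gt.deleteEdges H.edgeSet).connectedComponentMk x.1
      rw [hidx v]
      exact (SimpleGraph.ConnectedComponent.eq.mpr hv).symm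
  have hfix : ∀ x : H.verts, idx x.1 = x :=
    fun x => (hidx_eq x x.1).mpr (SimpleGraph.Reachable.refl _)
  -- the extension operator
  set T : (H.verts → ℝ) →ₗ[ℝ] (V → ℝ) := LinearMap.funLeft ℝ ℝ idx with hTdef
  have hTapp : ∀ (u : H.verts → ℝ) (v : V), T u v = u (idx v) := fun u v => rfl
  have hTinj : Function.Injective T :=
    LinearMap.funLeft_injective_of_surjective ℝ ℝ idx (fun x => ⟨x.1, hfix x⟩)
  -- edges of Gt are either edges of H or lie within a tooth
  have hdich : ∀ x y, Gt.Adj x y → ¬ H.Adj x y → idx x = idx y := by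
    intro x y hxy hH
    have hD : (Gt.deleteEdges H.edgeSet).Adj x y :=
      SimpleGraph.deleteEdges_adj.mpr
        ⟨hxy, fun hc => hH (SimpleGraph.Subgraph.mem_edgeSet.mp hc)⟩
    apply hcomb.1
    show (Gt.deleteEdges H.edgeSet).connectedComponentMk (idx x).1
      = (Gt.deleteEdges H.edgeSet).connectedComponentMk (idx y).1
    rw [hidx x, hidx y]
    exact SimpleGraph.ConnectedComponent.eq.mpr hD.reachable
  -- energy identity for the extension
  have henergy : ∀ u : H.verts → ℝ,
      energy Gt w (T u) = energy H.coe (fun a b : H.verts => w a.1 b.1) u := by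
    intro u
    unfold energy
    congr 1
    have step1 : (∑ x : V, ∑ y : V, if Gt.Adj x y then w x y * (T u y - T u x) ^ 2 else 0)
        = ∑ x : V, ∑ y : V, if H.Adj x y then w x y * (u (idx y) - u (idx x)) ^ 2 else 0 := by
      refine Finset.sum_congr rfl fun x _ => Finset.sum_congr rfl fun y _ => ?_
      by_cases hH : H.Adj x y
      · rw [if_pos hH, if_pos (H.adj_sub hH)]
        rfl
      · rw [if_neg hH]
        by_cases hG : Gt.Adj x y
        · rw [if_pos hG, hTapp, hTapp, hdich x y hG hH]
          ring
        · rw [if_neg hG]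
    have step2 : (∑ x : V, ∑ y : V, if H.Adj x y then w x y * (u (idx y) - u (idx x)) ^ 2 else 0)
        = ∑ a : H.verts, ∑ y : V, if H.Adj a.1 y then w a.1 y * (u (idx y) - u (idx a.1)) ^ 2 else 0 := by
      refine SteklovAux.sum_eq_sum_subtype (p := fun x => x ∈ H.verts) _ ?_
      intro x hx
      by_contra hxm
      apply hx
      refine Finset.sum_eq_zero fun y _ => ?_
      rw [if_neg]
      intro hadj
      exact hxm (H.edge_vert hadj)
    have step3 : ∀ a : H.verts,
        (∑ y : V, if H.Adj a.1 y then w a.1 y * (u (idx y) - u (idx a.1)) ^ 2 else 0)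
        = ∑ b : H.verts, if H.Adj a.1 b.1 then w a.1 b.1 * (u (idx b.1) - u (idx a.1)) ^ 2 else 0 := by
      intro a
      refine SteklovAux.sum_eq_sum_subtype (p := fun y => y ∈ H.verts) _ ?_
      intro y hy
      by_contra hym
      apply hy
      rw [if_neg]
      intro hadj
      exact hym (H.edge_vert hadj.symm)
    have step4 : ∀ a b : H.verts,
        (if H.Adj a.1 b.1 then w a.1 b.1 * (u (idx b.1) - u (idx a.1)) ^ 2 else 0)
        = if H.coe.Adj a b then w a.1 b.1 * (u b - u a) ^ 2 else 0 := by
      intro a b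
      simp only [SimpleGraph.Subgraph.coe_adj, hfix]
    rw [step1, step2]
    refine (Finset.sum_congr rfl fun a _ => ?_)
    rw [step3 a]
    exact Finset.sum_congr rfl fun b _ => step4 a b
  -- boundary fibers are nonempty
  have hmT_nonneg : ∀ A : Set V, 0 ≤ mTotal A m := by
    intro A
    unfold mTotal
    refine Finset.sum_nonneg fun v _ => ?_
    split
    · exact (hm v).le
    · exact le_refl 0
  have hBfiber : ∀ x : H.verts, x.1 ∈ B → ∃ v, v ∈ Bt ∧ idx v = x := by
    intro x hx
    by_contra hcon
    push_neg at hcon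
    have h0 : mTotal (Bt ∩ tooth Gt H x.1) m = 0 := by
      unfold mTotal
      refine Finset.sum_eq_zero fun v _ => ?_
      rw [if_neg]
      rintro ⟨hv1, hv2⟩
      exact hcon v hv1 ((hidx_eq x v).mpr hv2)
    have h1 := hmeas x.1 hx
    rw [h0] at h1
    exact absurd h1 (not_le.mpr (hm x.1))
  -- comparison of the boundary inner products
  have hbinner : ∀ u : H.verts → ℝ,
      bInner (Subtype.val ⁻¹' B) (fun a : H.verts => m a.1) u u
        ≤ bInner Bt m (T u) (T u) := by
    intro u
    unfold bInner
    rw [← Finset.sum_fiberwise Finset.univ idx (fun v => if v ∈ Bt then T u v * T u v * m v else 0)]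
    refine Finset.sum_le_sum fun j _ => ?_
    have hfib : (∑ v ∈ Finset.univ.filter (fun v => idx v = j),
          (if v ∈ Bt then T u v * T u v * m v else 0))
        = u j * u j * mTotal (Bt ∩ tooth Gt H j.1) m := by
      unfold mTotal
      rw [Finset.sum_filter, Finset.mul_sum]
      refine Finset.sum_congr rfl fun v _ => ?_
      by_cases hvj : idx v = j
      · rw [if_pos hvj]
        by_cases hvB : v ∈ Bt
        · rw [if_pos hvB, if_pos (Set.mem_inter hvB ((hidx_eq j v).mp hvj)), hTapp, hvj]
        · rw [if_neg hvB, if_neg (fun hc => hvB hc.1), mul_zero]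
      · rw [if_neg hvj, if_neg, mul_zero]
        rintro ⟨hv1, hv2⟩
        exact hvj ((hidx_eq j v).mpr hv2)
    rw [hfib]
    by_cases hj : j ∈ (Subtype.val ⁻¹' B : Set H.verts)
    · rw [if_pos hj]
      exact mul_le_mul_of_nonneg_left (hmeas j.1 hj) (mul_self_nonneg (u j))
    · rw [if_neg hj]
      exact mul_nonneg (mul_self_nonneg (u j)) (hmT_nonneg _)
  -- the target set is nonempty : construct a test subspace
  have hBcard : i ≤ (Finset.univ.filter (fun a : H.verts => a.1 ∈ B)).card := by
    have h1 : (((Finset.univ.filter (fun a : H.verts => a.1 ∈ B)).image Subtype.val : Finset V) : Set V) = B := by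
      ext v
      simp only [Finset.coe_image, Finset.coe_filter, Finset.mem_univ, true_and,
        Set.mem_image, Set.mem_setOf_eq]
      constructor
      · rintro ⟨a, ha, rfl⟩; exact ha
      · intro hv; exact ⟨⟨v, hB hv⟩, hv, rfl⟩
    have h2 := Set.ncard_coe_finset
      ((Finset.univ.filter (fun a : H.verts => a.1 ∈ B)).image Subtype.val)
    rw [h1, Finset.card_image_of_injective _ Subtype.val_injective] at h2
    omega
  obtain ⟨S, hSsub, hScard⟩ := Finset.exists_subset_card_eq hBcard
  have hSB : ∀ a ∈ S, a.1 ∈ B := fun a ha => (Finset.mem_filter.mp (hSsub ha)).2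
  have hgli : LinearIndependent ℝ (fun a : {a // a ∈ S} => (Pi.single a.1 1 : H.verts → ℝ)) := by
    have h := (Pi.basisFun ℝ H.verts).linearIndependent
    have h2 := h.comp (Subtype.val : {a // a ∈ S} → H.verts) Subtype.val_injective
    convert h2 using 1
    funext a
    simp [Pi.basisFun_apply]
  set E₀ : Submodule ℝ (H.verts → ℝ) :=
    Submodule.span ℝ (Set.range (fun a : {a // a ∈ S} => (Pi.single a.1 1 : H.verts → ℝ))) with hE₀def
  have hrk₀ : Module.finrank ℝ E₀ = i := by
    rw [hE₀def, finrank_span_eq_card hgli, Fintype.card_coe, hScard]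
  have hsupp : ∀ u ∈ E₀, ∀ a, a ∉ S → u a = 0 := by
    intro u hu
    refine Submodule.span_induction (p := fun x _ => ∀ a, a ∉ S → x a = 0)
      ?_ ?_ ?_ ?_ hu
    · rintro x ⟨b, rfl⟩ a ha
      exact Pi.single_eq_of_ne (fun hc => ha (by rw [hc]; exact b.2)) 1
    · intro a _; rfl
    · intro x y _ _ hx' hy' a ha
      simp [hx' a ha, hy' a ha]
    · intro c x _ hx' a ha
      simp [hx' a ha]
  have hinj₀ : ∀ u ∈ E₀, (∀ x ∈ (Subtype.val ⁻¹' B : Set H.verts), u x = 0) → u = 0 := by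
    intro u hu hv
    funext a
    simp only [Pi.zero_apply]
    by_cases ha : a ∈ S
    · exact hv a (hSB a ha)
    · exact hsupp u hu a ha
  have hSne : S.Nonempty := Finset.card_pos.mp (by omega)
  haveI hVne : Nonempty H.verts := ⟨hSne.choose⟩
  obtain ⟨a₀, -, ha₀⟩ := Finset.exists_min_image (Finset.univ : Finset H.verts)
    (fun a => m a.1) Finset.univ_nonempty
  set C : ℝ := ∑ a : H.verts, ∑ b : H.verts, (if H.coe.Adj a b then w a.1 b.1 else 0) with hCdef
  have hwcoe : ∀ a b : H.verts, H.coe.Adj a b → 0 ≤ w a.1 b.1 := by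
    intro a b hab
    exact (hw_pos _ _ (H.adj_sub ((SimpleGraph.Subgraph.coe_adj H a b) ▸ hab))).le
  have hC0 : 0 ≤ C := by
    rw [hCdef]
    refine Finset.sum_nonneg fun a _ => Finset.sum_nonneg fun b _ => ?_
    split
    next h => exact hwcoe a b h
    next => exact le_refl 0
  have hm₀ : 0 < m a₀.1 := hm _
  have hray₀ : ∀ u ∈ E₀, energy H.coe (fun a b : H.verts => w a.1 b.1) u
      ≤ (C / m a₀.1) * bInner (Subtype.val ⁻¹' B) (fun a : H.verts => m a.1) u u := by
    intro u hu
    have hus := hsupp u hu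
    set M : ℝ := ∑ a : H.verts, u a * u a with hMdef
    have hM0 : 0 ≤ M := Finset.sum_nonneg fun a _ => mul_self_nonneg _
    have hbM : m a₀.1 * M ≤ bInner (Subtype.val ⁻¹' B) (fun a : H.verts => m a.1) u u := by
      unfold bInner
      rw [hMdef, Finset.mul_sum]
      refine Finset.sum_le_sum fun a _ => ?_
      by_cases ha : a ∈ (Subtype.val ⁻¹' B : Set H.verts)
      · rw [if_pos ha]
        have h1 := ha₀ a (Finset.mem_univ a)
        nlinarith [mul_self_nonneg (u a)]
      · rw [if_neg ha]
        have hua : u a = 0 := hus a (fun hc => ha (hSB a hc))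
        rw [hua]
        simp
    have heM : energy H.coe (fun a b : H.verts => w a.1 b.1) u ≤ C * M := by
      unfold energy
      rw [div_le_iff₀ (by norm_num : (0:ℝ) < 2)]
      have hterm : ∀ a b : H.verts,
          (if H.coe.Adj a b then w a.1 b.1 * (u b - u a) ^ 2 else 0)
          ≤ (if H.coe.Adj a b then w a.1 b.1 else 0) * (2 * M) := by
        intro a b
        by_cases hab : H.coe.Adj a b
        · rw [if_pos hab, if_pos hab]
          have hw1 : 0 ≤ w a.1 b.1 := hwcoe a b hab
          have hne : a ≠ b := hab.ne
          have h2 : u a * u a + u b * u b ≤ M := by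
            rw [hMdef]
            have h3 := Finset.sum_le_sum_of_subset_of_nonneg
              (Finset.subset_univ {a, b}) (fun x _ _ => mul_self_nonneg (u x))
            rwa [Finset.sum_pair hne] at h3
          nlinarith [sq_nonneg (u a + u b)]
        · rw [if_neg hab, if_neg hab, zero_mul]
      calc (∑ a : H.verts, ∑ b : H.verts,
              if H.coe.Adj a b then w a.1 b.1 * (u b - u a) ^ 2 else 0)
          ≤ ∑ a : H.verts, ∑ b : H.verts,
              (if H.coe.Adj a b then w a.1 b.1 else 0) * (2 * M) :=
            Finset.sum_le_sum fun a _ => Finset.sum_le_sum fun b _ => hterm a b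
        _ = C * (2 * M) := by rw [hCdef]; simp [Finset.sum_mul]
        _ = C * M * 2 := by ring
    calc energy H.coe (fun a b : H.verts => w a.1 b.1) u ≤ C * M := heM
      _ = (C / m a₀.1) * (m a₀.1 * M) := by field_simp
      _ ≤ (C / m a₀.1) * bInner (Subtype.val ⁻¹' B) (fun a : H.verts => m a.1) u u :=
          mul_le_mul_of_nonneg_left hbM (div_nonneg hC0 hm₀.le)
  -- assemble
  unfold steklovSub steklov
  apply csInf_le_csInf
  · refine ⟨0, fun σ hσ => ?_⟩
    obtain ⟨E, h1, h2, h3⟩ := hσ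
    exact SteklovAux.sigma_nonneg Gt Bt m w hm (fun x y h => (hw_pos x y h).le) hi1 E h1 h2 h3
  · exact ⟨C / m a₀.1, E₀, hrk₀, hinj₀, hray₀⟩
  · rintro σ ⟨E, hrk, hinj, hray⟩
    have hσ0 : 0 ≤ σ := by
      refine SteklovAux.sigma_nonneg H.coe (Subtype.val ⁻¹' B) (fun a : H.verts => m a.1)
        (fun a b : H.verts => w a.1 b.1) (fun a => hm a.1) ?_ hi1 E hrk hinj hray
      intro a b hab
      exact hwcoe a b hab
    refine ⟨E.map T, ?_, ?_, ?_⟩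
    · rw [← hrk]
      exact (LinearEquiv.finrank_eq (Submodule.equivMapOfInjective T hTinj E)).symm
    · intro u' hu' hvan
      obtain ⟨u, hu, rfl⟩ := Submodule.mem_map.mp hu'
      have hzero : ∀ x ∈ (Subtype.val ⁻¹' B : Set H.verts), u x = 0 := by
        intro x hx
        obtain ⟨v, hv1, hv2⟩ := hBfiber x hx
        have h := hvan v hv1
        rw [hTapp, hv2] at h
        exact h
      rw [hinj u hu hzero, map_zero]
    · intro u' hu'
      obtain ⟨u, hu, rfl⟩ := Submodule.mem_map.mp hu'
      calc energy Gt w (T u) = energy H.coe (fun a b : H.verts => w a.1 b.1) u := henergy u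
        _ ≤ σ * bInner (Subtype.val ⁻¹' B) (fun a : H.verts => m a.1) u u := hray u hu
        _ ≤ σ * bInner Bt m (T u) (T u) := mul_le_mul_of_nonneg_left (hbinner u) hσ0
end

section
/- Let G̃ be a finite combinatorial tree with boundary and let G be a nontrivial subtree of G̃, also viewed as a combinatorial tree with boundary. Then σ_i(G̃) ≤ σ_i(G) for every i = 1, 2, …, |L(G)|. -/
/-
Common definitions for Steklov eigenvalues on weighted finite graphs with boundary,
following Yu-Yu, "Monotonicity of Steklov eigenvalues on graphs and applications".
-/

attribute [local instance] Classical.propDecidable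

section Aux

attribute [local instance] Classical.propDecidable

open SimpleGraph Finset

variable {V : Type*} [Fintype V]

private lemma sum_eq_sum_subtype (S : Set V) (f : V → ℝ) (hf : ∀ x, x ∉ S → f x = 0) :
    ∑ x : V, f x = ∑ x : S, f x.1 := by
  classical
  rw [← Finset.sum_subtype (s := S.toFinset) (fun x => Set.mem_toFinset) f]
  exact (Finset.sum_subset (Finset.subset_univ _)
    (fun x _ hx => hf x (by simpa [Set.mem_toFinset] using hx))).symm

private lemma bInner_nonneg (B : Set V) (u : V → ℝ) :
    0 ≤ bInner B (fun _ => 1) u u := by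
  apply Finset.sum_nonneg
  intro x _
  dsimp only
  split
  · nlinarith [mul_self_nonneg (u x)]
  · exact le_refl 0

private lemma energy_nonneg (G : SimpleGraph V) (u : V → ℝ) :
    0 ≤ energy G (fun _ _ => 1) u := by
  apply div_nonneg _ (by norm_num)
  apply Finset.sum_nonneg; intro x _
  apply Finset.sum_nonneg; intro y _
  split
  · positivity
  · exact le_refl 0

private lemma steklov_mem_nonneg (G : SimpleGraph V) (B : Set V) (i : ℕ) (hi : 1 ≤ i) {σ : ℝ}
    (hσ : σ ∈ {σ : ℝ | ∃ E : Submodule ℝ (V → ℝ), Module.finrank ℝ E = i ∧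
      (∀ u ∈ E, (∀ x ∈ B, u x = 0) → u = 0) ∧
      ∀ u ∈ E, energy G (fun _ _ => 1) u ≤ σ * bInner B (fun _ => 1) u u}) : 0 ≤ σ := by
  obtain ⟨E, hrank, hinj, hray⟩ := hσ
  by_contra hneg
  push_neg at hneg
  have hEbot : E ≠ ⊥ := by
    intro h
    rw [h, finrank_bot] at hrank
    omega
  obtain ⟨u, huE, hu0⟩ := Submodule.exists_mem_ne_zero_of_ne_bot hEbot
  have h1 := hray u huE
  have h2 : 0 ≤ bInner B (fun _ => 1) u u := bInner_nonneg B u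
  have h3 : 0 ≤ energy G (fun _ _ => 1) u := energy_nonneg G u
  have h4 : σ * bInner B (fun _ => 1) u u ≤ 0 :=
    mul_nonpos_of_nonpos_of_nonneg hneg.le h2
  have h5 : bInner B (fun _ => 1) u u = 0 := by nlinarith
  have h6 : ∀ x ∈ B, u x = 0 := by
    intro x hx
    have hterm := (Finset.sum_eq_zero_iff_of_nonneg (f := fun x : V =>
        if x ∈ B then u x * u x * 1 else 0)
      (fun y _ => by
        split
        · nlinarith [mul_self_nonneg (u y)]
        · exact le_refl 0)).1 h5 x (Finset.mem_univ x)
    simp only [if_pos hx, mul_one] at hterm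
    exact mul_self_eq_zero.1 hterm
  exact hu0 (hinj u huE h6)

private lemma steklov_set_nonempty (G : SimpleGraph V) (B : Set V) (i : ℕ) (hi : i ≤ B.ncard) :
    Set.Nonempty {σ : ℝ | ∃ E : Submodule ℝ (V → ℝ), Module.finrank ℝ E = i ∧
      (∀ u ∈ E, (∀ x ∈ B, u x = 0) → u = 0) ∧
      ∀ u ∈ E, energy G (fun _ _ => 1) u ≤ σ * bInner B (fun _ => 1) u u} := by
  classical
  refine ⟨2 * Fintype.card V, ?_⟩
  have hcard : i ≤ B.toFinset.card := by rwa [Set.ncard_eq_toFinset_card'] at hi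
  obtain ⟨T, hTB, hTcard⟩ := Finset.exists_subset_card_eq hcard
  let E : Submodule ℝ (V → ℝ) :=
    { carrier := {u | ∀ x, x ∉ T → u x = 0}
      add_mem' := fun hu hv x hx => by simp [hu x hx, hv x hx]
      zero_mem' := fun x _ => rfl
      smul_mem' := fun c u hu x hx => by simp [hu x hx] }
  have hmemE : ∀ u : V → ℝ, u ∈ E ↔ ∀ x, x ∉ T → u x = 0 := fun u => Iff.rfl
  let e : E ≃ₗ[ℝ] (↥T → ℝ) :=
    { toFun := fun u x => u.1 x.1
      map_add' := fun u v => rfl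
      map_smul' := fun c u => rfl
      invFun := fun g => ⟨fun x => if h : x ∈ T then g ⟨x, h⟩ else 0, fun x hx => dif_neg hx⟩
      left_inv := fun u => Subtype.ext (funext fun x => by
        by_cases h : x ∈ T
        · simp [h]
        · simp [h, u.2 x h])
      right_inv := fun g => funext fun x => by simp [x.2] }
  have hrank : Module.finrank ℝ E = i := by
    rw [e.finrank_eq, Module.finrank_fintype_fun_eq_card, Fintype.card_coe]
    exact hTcard
  have hTB' : ∀ x, x ∈ T → x ∈ B := fun x hx => by
    have := hTB hx
    simpa [Set.mem_toFinset] using this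
  refine ⟨E, hrank, ?_, ?_⟩
  · intro u huE hub
    funext x
    by_cases h : x ∈ T
    · exact hub x (hTB' x h)
    · exact (hmemE u).1 huE x h
  · intro u huE
    have hsupp : ∀ x, x ∉ T → u x = 0 := (hmemE u).1 huE
    have hB : bInner B (fun _ => 1) u u = ∑ x : V, u x ^ 2 := by
      apply Finset.sum_congr rfl
      intro x _
      by_cases hx : x ∈ B
      · rw [if_pos hx]; ring
      · rw [if_neg hx, hsupp x (fun hxT => hx (hTB' x hxT))]
        ring
    rw [hB]
    unfold energy
    rw [div_le_iff₀ (by norm_num : (0:ℝ) < 2)]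
    have step1 : ∑ x : V, ∑ y : V, (if G.Adj x y then 1 * (u y - u x) ^ 2 else 0) ≤
        ∑ x : V, ∑ y : V, (2 * u x ^ 2 + 2 * u y ^ 2) := by
      apply Finset.sum_le_sum; intro x _
      apply Finset.sum_le_sum; intro y _
      split_ifs with h
      · nlinarith [sq_nonneg (u x + u y)]
      · positivity
    have step2 : ∑ x : V, ∑ y : V, (2 * u x ^ 2 + 2 * u y ^ 2) =
        2 * ↑(Fintype.card V) * (∑ x : V, u x ^ 2) * 2 := by
      have hrow : ∀ x : V, ∑ y : V, (2 * u x ^ 2 + 2 * u y ^ 2) =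
          (Fintype.card V : ℝ) * (2 * u x ^ 2) + 2 * ∑ y : V, u y ^ 2 := by
        intro x
        rw [Finset.sum_add_distrib, Finset.sum_const, Finset.card_univ, nsmul_eq_mul,
          ← Finset.mul_sum]
      rw [Finset.sum_congr rfl (fun x _ => hrow x), Finset.sum_add_distrib,
        ← Finset.mul_sum, Finset.sum_const, Finset.card_univ, nsmul_eq_mul, ← Finset.mul_sum]
      ring
    exact step1.trans (le_of_eq step2)

variable (Gt : SimpleGraph V) (H : Gt.Subgraph)

private lemma tooth_exists' (hconn : Gt.Connected) (hne : H.verts.Nonempty) (v : V) :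
    ∃ x ∈ H.verts, (Gt.deleteEdges H.edgeSet).Reachable v x := by
  obtain ⟨x₀, hx₀⟩ := hne
  obtain ⟨W⟩ := hconn.preconnected v x₀
  induction W with
  | nil =>
    exact ⟨_, hx₀, Reachable.refl _⟩
  | @cons a c b hadj W ih =>
    by_cases he : s(a, c) ∈ H.edgeSet
    · exact ⟨a, H.mem_verts_of_mem_edge he (Sym2.mem_mk_left a c), Reachable.refl a⟩
    · obtain ⟨x, hx, hr⟩ := ih hx₀
      refine ⟨x, hx, (SimpleGraph.Adj.reachable ?_).trans hr⟩
      rw [SimpleGraph.deleteEdges_adj]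
      exact ⟨hadj, he⟩

private lemma tooth_unique' (hGt : Gt.IsTree) (hsub : H.coe.Connected) {x y : V}
    (hx : x ∈ H.verts) (hy : y ∈ H.verts)
    (h : (Gt.deleteEdges H.edgeSet).Reachable x y) : x = y := by
  by_contra hne
  obtain ⟨W⟩ := h
  have hsubset : ∀ e ∈ (W.toPath : (Gt.deleteEdges H.edgeSet).Walk x y).edges,
      e ∈ Gt.edgeSet := by
    intro e he
    have h1 := Walk.edges_subset_edgeSet _ he
    rw [SimpleGraph.edgeSet_deleteEdges] at h1
    exact h1.1
  set P := ((W.toPath : (Gt.deleteEdges H.edgeSet).Walk x y)).transfer Gt hsubset with hPdef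
  have hPpath : P.IsPath := (W.toPath.2).transfer hsubset
  have hPedges : ∀ e ∈ P.edges, e ∉ H.edgeSet := by
    rw [hPdef, Walk.edges_transfer]
    intro e he heH
    have h1 := Walk.edges_subset_edgeSet _ he
    rw [SimpleGraph.edgeSet_deleteEdges] at h1
    exact h1.2 heH
  obtain ⟨W2⟩ := hsub.preconnected ⟨x, hx⟩ ⟨y, hy⟩
  set Q := (W2.toPath : H.coe.Walk ⟨x, hx⟩ ⟨y, hy⟩).map H.hom with hQdef
  have hQpath : Q.IsPath :=
    Walk.map_isPath_of_injective Subgraph.hom_injective W2.toPath.2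
  have hQedges : ∀ e ∈ Q.edges, e ∈ H.edgeSet := by
    intro e he
    rw [hQdef, Walk.edges_map] at he
    obtain ⟨e', he', rfl⟩ := List.mem_map.1 he
    have h2 := Walk.edges_subset_edgeSet _ he'
    revert h2
    refine Sym2.ind (fun a b h2 => ?_) e'
    exact Subgraph.mem_edgeSet.2 ((SimpleGraph.mem_edgeSet _).1 h2)
  obtain ⟨R, hR, hRu⟩ := hGt.existsUnique_path x y
  have hPQ : P = Q := (hRu P hPpath).trans (hRu Q hQpath).symm
  have hQne : Q.edges ≠ [] := by
    intro h0
    have hlen : Q.length = 0 := by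
      have := Walk.length_edges Q
      rw [h0] at this
      simpa using this.symm
    exact hne (Walk.eq_of_length_eq_zero hlen)
  obtain ⟨e, he⟩ := List.exists_mem_of_ne_nil _ hQne
  exact hPedges e (hPQ ▸ he) (hQedges e he)

private lemma exists_boundary_in_tooth (hGt : Gt.IsTree) (hsub : H.coe.Connected)
    (x : V) (hx : x ∈ H.verts)
    (hxB : (H.coe.neighborSet ⟨x, hx⟩).ncard ≤ 1) :
    ∃ y : V, (Gt.neighborSet y).ncard ≤ 1 ∧ (Gt.deleteEdges H.edgeSet).Reachable x y := by
  classical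
  set del := Gt.deleteEdges H.edgeSet with hdel
  by_cases hT : ∀ v, del.Reachable x v → v = x
  · refine ⟨x, ?_, Reachable.refl x⟩
    have hmap : ∀ w ∈ Gt.neighborSet x, H.Adj x w := by
      intro w hw
      by_contra hno
      have hadj : del.Adj x w := by
        rw [hdel, SimpleGraph.deleteEdges_adj]
        exact ⟨hw, fun he => hno (Subgraph.mem_edgeSet.1 he)⟩
      have hwx := hT w hadj.reachable
      subst hwx
      exact Gt.irrefl hw
    have hle := Set.ncard_le_ncard_of_injOn
      (fun w => if h : w ∈ H.verts then (⟨w, h⟩ : H.verts) else ⟨x, hx⟩)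
      (s := Gt.neighborSet x) (t := H.coe.neighborSet ⟨x, hx⟩)
      (fun w hw => by
        have hA := hmap w hw
        rw [dif_pos (H.edge_vert hA.symm)]
        exact hA)
      (fun a ha b hb hab => by
        dsimp only at hab
        rw [dif_pos (H.edge_vert (hmap a ha).symm),
          dif_pos (H.edge_vert (hmap b hb).symm)] at hab
        exact congrArg Subtype.val hab)
      (Set.toFinite _)
    exact hle.trans hxB
  · push_neg at hT
    obtain ⟨v₀, hv₀r, hv₀x⟩ := hT
    obtain ⟨y, hy, hymax⟩ := Finset.exists_max_image
      (Finset.univ.filter (fun v => del.Reachable x v)) (fun v => Gt.dist x v)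
      ⟨v₀, by simp [hv₀r]⟩
    have hyr : del.Reachable x y := by simpa using hy
    have hpos : 1 ≤ Gt.dist x v₀ := by
      have hreach : Gt.Reachable x v₀ :=
        hv₀r.mono (SimpleGraph.deleteEdges_le H.edgeSet)
      exact hreach.pos_dist_of_ne (fun h => hv₀x h.symm)
    have hdy : 1 ≤ Gt.dist x y := le_trans hpos (hymax v₀ (by simp [hv₀r]))
    have hney : y ≠ x := by
      intro h
      subst h
      rw [SimpleGraph.dist_self] at hdy
      omega
    have hyH : y ∉ H.verts := fun h => hney (tooth_unique' Gt H hGt hsub hx h hyr).symm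
    have hnbr : ∀ w, Gt.Adj y w → del.Reachable x w := by
      intro w hadj
      refine hyr.trans (SimpleGraph.Adj.reachable ?_)
      rw [hdel, SimpleGraph.deleteEdges_adj]
      exact ⟨hadj, fun he => hyH (H.mem_verts_of_mem_edge he (Sym2.mem_mk_left y w))⟩
    have key : ∀ w, Gt.Adj y w → ∃ R : Gt.Walk x w, R.IsPath ∧ y ∉ R.support := by
      intro w hadj
      have hdw : Gt.dist x w ≤ Gt.dist x y := hymax w (by simp [hnbr w hadj])
      obtain ⟨R, hRp, hRl⟩ := hGt.isConnected.exists_path_of_dist x w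
      refine ⟨R, hRp, fun hysup => ?_⟩
      have h1 : Gt.dist x y ≤ (R.takeUntil y hysup).length := SimpleGraph.dist_le _
      have h2 : (R.dropUntil y hysup).length ≠ 0 :=
        fun h0 => hadj.ne (Walk.eq_of_length_eq_zero h0)
      have h3 : (R.takeUntil y hysup).length + (R.dropUntil y hysup).length = R.length := by
        rw [← Walk.length_append, Walk.take_spec]
      omega
    have hsing : ∀ w₁ ∈ Gt.neighborSet y, ∀ w₂ ∈ Gt.neighborSet y, w₁ = w₂ := by
      intro w₁ hw₁ w₂ hw₂
      rw [SimpleGraph.mem_neighborSet] at hw₁ hw₂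
      obtain ⟨R₁, hR₁p, hR₁s⟩ := key w₁ hw₁
      obtain ⟨R₂, hR₂p, hR₂s⟩ := key w₂ hw₂
      have hC₁ : (R₁.concat hw₁.symm).IsPath := by
        rw [← Walk.reverse_reverse (R₁.concat _)]
        apply Walk.IsPath.reverse
        rw [Walk.reverse_concat]
        apply Walk.IsPath.cons hR₁p.reverse
        rw [Walk.support_reverse, List.mem_reverse]
        exact hR₁s
      have hC₂ : (R₂.concat hw₂.symm).IsPath := by
        rw [← Walk.reverse_reverse (R₂.concat _)]
        apply Walk.IsPath.reverse
        rw [Walk.reverse_concat]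
        apply Walk.IsPath.cons hR₂p.reverse
        rw [Walk.support_reverse, List.mem_reverse]
        exact hR₂s
      obtain ⟨R, hR, hRu⟩ := hGt.existsUnique_path x y
      have heq : R₁.concat hw₁.symm = R₂.concat hw₂.symm :=
        (hRu _ hC₁).trans (hRu _ hC₂).symm
      have heq2 := congrArg (fun p : Gt.Walk x y => p.reverse.support) heq
      simp only [Walk.reverse_concat, Walk.support_cons] at heq2
      have heq3 : R₁.reverse.support = R₂.reverse.support := by
        have h5 := congrArg List.tail heq2
        simpa using h5
      have heq4 := congrArg List.head? heq3
      rw [Walk.support_eq_cons R₁.reverse, Walk.support_eq_cons R₂.reverse] at heq4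
      simpa using heq4
    refine ⟨y, ?_, hyr⟩
    rw [Set.ncard_le_one (Set.toFinite _)]
    exact hsing

end Aux

/-- **Corollary 1.6.** Monotonicity of Steklov eigenvalues on combinatorial trees:
if `G` is a nontrivial subtree of the finite combinatorial tree `G̃` (both viewed as
combinatorial trees with boundary, i.e. with unit weights and boundary the leaves),
then `σ_i(G̃) ≤ σ_i(G)` for every `i = 1,…,|L(G)|`. -/
theorem steklov_monotonicity_tree
    {V : Type*} [Fintype V] (Gt : SimpleGraph V) (hGt : Gt.IsTree)
    (H : Gt.Subgraph) (hsub : H.coe.IsTree) (hnt : H.verts.Nontrivial) :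
    ∀ i : ℕ, 1 ≤ i → i ≤ (combBoundary H.coe).ncard →
      steklov Gt (combBoundary Gt) (fun _ => 1) (fun _ _ => 1) i ≤
        steklov H.coe (combBoundary H.coe) (fun _ => 1) (fun _ _ => 1) i := by
  classical
  intro i hi1 hi2
  have hGconn := hGt.isConnected
  have hHconn := hsub.isConnected
  set del := Gt.deleteEdges H.edgeSet with hdel
  have hex : ∀ v : V, ∃ x : H.verts, del.Reachable v x.1 := by
    intro v
    obtain ⟨x, hx, hr⟩ := tooth_exists' Gt H hGconn hnt.nonempty v
    exact ⟨⟨x, hx⟩, hr⟩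
  choose p hp using hex
  have huniq : ∀ v (x : H.verts), del.Reachable v x.1 → p v = x := by
    intro v x hr
    exact Subtype.ext (tooth_unique' Gt H hGt hHconn (p v).2 x.2 ((hp v).symm.trans hr))
  have hpid : ∀ x : H.verts, p x.1 = x := fun x => huniq _ x (SimpleGraph.Reachable.refl _)
  have hpadj : ∀ {a b : V}, del.Adj a b → p a = p b := by
    intro a b hab
    exact huniq a (p b) (hab.reachable.trans (hp b))
  set Φ : (H.verts → ℝ) →ₗ[ℝ] (V → ℝ) := LinearMap.funLeft ℝ ℝ p with hΦ
  have hΦinj : Function.Injective Φ :=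
    LinearMap.funLeft_injective_of_surjective ℝ ℝ p (fun x => ⟨x.1, hpid x⟩)
  have hΦapply : ∀ (u : H.verts → ℝ) (v : V), Φ u v = u (p v) := fun _ _ => rfl
  have hleaf : ∀ x : H.verts, x ∈ combBoundary H.coe →
      ∃ y : V, y ∈ combBoundary Gt ∧ p y = x := by
    intro x hxB
    obtain ⟨y, hy1, hy2⟩ := exists_boundary_in_tooth Gt H hGt hHconn x.1 x.2 hxB
    exact ⟨y, hy1, huniq y x hy2.symm⟩
  have hleaf' : ∀ x : H.verts, ∃ y : V, x ∈ combBoundary H.coe →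
      (y ∈ combBoundary Gt ∧ p y = x) := by
    intro x
    by_cases h : x ∈ combBoundary H.coe
    · obtain ⟨y, hy1, hy2⟩ := hleaf x h
      exact ⟨y, fun _ => ⟨hy1, hy2⟩⟩
    · exact ⟨x.1, fun h' => absurd h' h⟩
  choose ι hι using hleaf'
  have hι1 : ∀ x : H.verts, x ∈ combBoundary H.coe → ι x ∈ combBoundary Gt :=
    fun x hx => (hι x hx).1
  have hι2 : ∀ x : H.verts, x ∈ combBoundary H.coe → p (ι x) = x :=
    fun x hx => (hι x hx).2
  have henergy : ∀ u : H.verts → ℝ,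
      energy Gt (fun _ _ => 1) (Φ u) = energy H.coe (fun _ _ => 1) u := by
    intro u
    unfold energy
    congr 1
    have hterm : ∀ a b : V, (if Gt.Adj a b then 1 * (Φ u b - Φ u a) ^ 2 else 0) =
        (if H.Adj a b then 1 * (u (p b) - u (p a)) ^ 2 else 0) := by
      intro a b
      by_cases hH : H.Adj a b
      · rw [if_pos (H.adj_sub hH), if_pos hH]
        simp only [hΦapply]
      · by_cases hG : Gt.Adj a b
        · have hdeladj : del.Adj a b := by
            rw [hdel, SimpleGraph.deleteEdges_adj]
            exact ⟨hG, fun he => hH (SimpleGraph.Subgraph.mem_edgeSet.1 he)⟩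
          rw [if_pos hG, if_neg hH, hΦapply, hΦapply, hpadj hdeladj]
          ring
        · rw [if_neg hG, if_neg hH]
    calc ∑ a : V, ∑ b : V, (if Gt.Adj a b then 1 * (Φ u b - Φ u a) ^ 2 else 0)
        = ∑ a : V, ∑ b : V, (if H.Adj a b then 1 * (u (p b) - u (p a)) ^ 2 else 0) :=
          Finset.sum_congr rfl fun a _ => Finset.sum_congr rfl fun b _ => hterm a b
      _ = ∑ a : H.verts, ∑ b : H.verts,
            (if H.Adj a.1 b.1 then 1 * (u (p b.1) - u (p a.1)) ^ 2 else 0) := by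
          rw [sum_eq_sum_subtype H.verts
            (fun a => ∑ b : V, (if H.Adj a b then 1 * (u (p b) - u (p a)) ^ 2 else 0))
            (fun a ha => Finset.sum_eq_zero fun b _ => if_neg (fun h => ha (H.edge_vert h)))]
          exact Finset.sum_congr rfl fun a _ =>
            sum_eq_sum_subtype H.verts _
              (fun b hb => if_neg (fun h => hb (H.edge_vert h.symm)))
      _ = ∑ a : H.verts, ∑ b : H.verts, (if H.coe.Adj a b then 1 * (u b - u a) ^ 2 else 0) := by
          refine Finset.sum_congr rfl fun a _ => Finset.sum_congr rfl fun b _ => ?_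
          simp only [hpid a, hpid b, SimpleGraph.Subgraph.coe_adj]
  have hbinner : ∀ u : H.verts → ℝ,
      bInner (combBoundary H.coe) (fun _ => 1) u u ≤
      bInner (combBoundary Gt) (fun _ => 1) (Φ u) (Φ u) := by
    intro u
    unfold bInner
    have h2 : ∀ x ∈ Finset.univ.filter (fun x : H.verts => x ∈ combBoundary H.coe),
        u x * u x * 1 = Φ u (ι x) * Φ u (ι x) * 1 := by
      intro x hx
      have hxB : x ∈ combBoundary H.coe := (Finset.mem_filter.1 hx).2
      rw [hΦapply, hι2 x hxB]
    have hinjι : ∀ x ∈ Finset.univ.filter (fun x : H.verts => x ∈ combBoundary H.coe),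
        ∀ y ∈ Finset.univ.filter (fun x : H.verts => x ∈ combBoundary H.coe),
        ι x = ι y → x = y := by
      intro x hx y hy hxy
      have hxB := (Finset.mem_filter.1 hx).2
      have hyB := (Finset.mem_filter.1 hy).2
      rw [← hι2 x hxB, ← hι2 y hyB, hxy]
    calc (∑ x : H.verts, if x ∈ combBoundary H.coe then u x * u x * 1 else 0)
        = ∑ x ∈ Finset.univ.filter (fun x : H.verts => x ∈ combBoundary H.coe),
            u x * u x * 1 := (Finset.sum_filter _ _).symm
      _ = ∑ x ∈ Finset.univ.filter (fun x : H.verts => x ∈ combBoundary H.coe),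
            Φ u (ι x) * Φ u (ι x) * 1 := Finset.sum_congr rfl h2
      _ = ∑ v ∈ (Finset.univ.filter
            (fun x : H.verts => x ∈ combBoundary H.coe)).image ι,
            Φ u v * Φ u v * 1 := by rw [Finset.sum_image hinjι]
      _ ≤ ∑ v ∈ Finset.univ.filter (fun v : V => v ∈ combBoundary Gt),
            Φ u v * Φ u v * 1 := by
          apply Finset.sum_le_sum_of_subset_of_nonneg
          · intro v hv
            obtain ⟨x, hx, rfl⟩ := Finset.mem_image.1 hv
            have hxB := (Finset.mem_filter.1 hx).2
            exact Finset.mem_filter.2 ⟨Finset.mem_univ _, hι1 x hxB⟩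
          · intro v _ _
            nlinarith [mul_self_nonneg (Φ u v)]
      _ = ∑ v : V, if v ∈ combBoundary Gt then Φ u v * Φ u v * 1 else 0 :=
          Finset.sum_filter _ _
  unfold steklov
  apply csInf_le_csInf
  · exact ⟨0, fun σ hσ => steklov_mem_nonneg Gt (combBoundary Gt) i hi1 hσ⟩
  · exact steklov_set_nonempty H.coe (combBoundary H.coe) i hi2
  · intro σ hσ
    have hσ0 : 0 ≤ σ := steklov_mem_nonneg H.coe (combBoundary H.coe) i hi1 hσ
    obtain ⟨E, hrank, hinjE, hray⟩ := hσ
    refine ⟨Submodule.map Φ E, ?_, ?_, ?_⟩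
    · rw [← hrank]
      exact (LinearEquiv.finrank_eq (Submodule.equivMapOfInjective Φ hΦinj E)).symm
    · rintro w hw hvan
      obtain ⟨u, huE, rfl⟩ := Submodule.mem_map.1 hw
      have hvanB : ∀ x : H.verts, x ∈ combBoundary H.coe → u x = 0 := by
        intro x hxB
        have h1 := hvan (ι x) (hι1 x hxB)
        rw [hΦapply, hι2 x hxB] at h1
        exact h1
      rw [hinjE u huE hvanB, map_zero]
    · rintro w hw
      obtain ⟨u, huE, rfl⟩ := Submodule.mem_map.1 hw
      calc energy Gt (fun _ _ => 1) (Φ u) = energy H.coe (fun _ _ => 1) u := henergy u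
        _ ≤ σ * bInner (combBoundary H.coe) (fun _ => 1) u u := hray u huE
        _ ≤ σ * bInner (combBoundary Gt) (fun _ => 1) (Φ u) (Φ u) :=
            mul_le_mul_of_nonneg_left (hbinner u) hσ0
end

section
/- Let (G̃, B̃, m, w) be a weighted connected finite graph with boundary and (G, B) be such that G is a connected subgraph of G̃ with |B| ≥ 2. Suppose G̃ is a comb over G and m(B̃_x) ≥ m_x for every x ∈ B. Suppose moreover that σ_2(G̃) = σ_2(G) and Z₁ ⊆ Ω. Then: (1) B̃_x = {x} for every x ∈ B; (2) B̃_y = ∅ for every y ∈ Ω∖Z₁; (3) λ_1(G̃_z, B̃_z∖{z}, {z}) ≥ σ_2(G) for every z ∈ Z₁. -/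
/-
Common definitions for Steklov eigenvalues on weighted finite graphs with boundary,
following Yu-Yu, "Monotonicity of Steklov eigenvalues on graphs and applications".
-/

attribute [local instance] Classical.propDecidable

/- ===== Auxiliary machinery for the proof ===== -/

attribute [local instance] Classical.propDecidable

namespace YYAux

open Finset

noncomputable section

variable {V : Type*} [Fintype V]

/-- Bilinear Dirichlet energy. -/
def ebil (G : SimpleGraph V) (w : V → V → ℝ) (u v : V → ℝ) : ℝ :=
  (∑ x : V, ∑ y : V, if G.Adj x y then w x y * (u y - u x) * (v y - v x) else 0) / 2

lemma ebil_self (G : SimpleGraph V) (w : V → V → ℝ) (u : V → ℝ) :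
    ebil G w u u = energy G w u := by
  unfold ebil energy
  congr 1
  refine Finset.sum_congr rfl fun x _ => Finset.sum_congr rfl fun y _ => ?_
  split_ifs <;> ring

lemma bInner_comm (B : Set V) (m : V → ℝ) (u v : V → ℝ) :
    bInner B m u v = bInner B m v u := by
  unfold bInner
  refine Finset.sum_congr rfl fun x _ => ?_
  split_ifs <;> ring

lemma bInner_nonneg (B : Set V) {m : V → ℝ} (hm : ∀ x, 0 < m x) (u : V → ℝ) :
    0 ≤ bInner B m u u := by
  refine Finset.sum_nonneg fun x _ => ?_
  split_ifs
  · have := (hm x).le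
    nlinarith [mul_self_nonneg (u x)]
  · exact le_refl 0

lemma energy_nonneg {G : SimpleGraph V} {w : V → V → ℝ}
    (hw : ∀ x y, G.Adj x y → 0 ≤ w x y) (u : V → ℝ) :
    0 ≤ energy G w u := by
  unfold energy
  apply div_nonneg _ (by norm_num)
  refine Finset.sum_nonneg fun x _ => Finset.sum_nonneg fun y _ => ?_
  split_ifs with h
  · exact mul_nonneg (hw x y h) (sq_nonneg _)
  · exact le_refl 0

lemma bInner_pos {B : Set V} {m : V → ℝ} (hm : ∀ x, 0 < m x) {u : V → ℝ}
    {x : V} (hx : x ∈ B) (hux : u x ≠ 0) : 0 < bInner B m u u := by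
  have h1 : (if x ∈ B then u x * u x * m x else 0) ≤ bInner B m u u := by
    unfold bInner
    refine Finset.single_le_sum (f := fun i => if i ∈ B then u i * u i * m i else 0)
      (fun i _ => ?_) (Finset.mem_univ x)
    split_ifs
    · nlinarith [mul_self_nonneg (u i), (hm i).le]
    · exact le_refl 0
  have h2 : 0 < u x * u x * m x := by
    have := hm x
    have := mul_self_pos.mpr hux
    positivity
  simp only [hx, if_true] at h1
  linarith

lemma bInner_eq_zero {B : Set V} {m : V → ℝ} (hm : ∀ x, 0 < m x) {u : V → ℝ}
    (h : bInner B m u u = 0) : ∀ x ∈ B, u x = 0 := by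
  intro x hx
  by_contra hux
  exact ne_of_gt (bInner_pos hm hx hux) h

lemma exists_boundary_ne_zero {B : Set V} {m : V → ℝ} (hm : ∀ x, 0 < m x) {u : V → ℝ}
    (h : bInner B m u u ≠ 0) : ∃ x ∈ B, u x ≠ 0 := by
  by_contra hc
  push_neg at hc
  apply h
  unfold bInner
  refine Finset.sum_eq_zero fun x _ => ?_
  split_ifs with hx
  · rw [hc x hx]; ring
  · rfl

/-- expansion of `energy` under `u + a*v`. -/
lemma energy_expand (G : SimpleGraph V) (w : V → V → ℝ) (u v : V → ℝ) (a : ℝ) :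
    energy G w (fun x => u x + a * v x)
      = energy G w u + 2 * a * ebil G w u v + a ^ 2 * energy G w v := by
  unfold energy ebil
  have key : ∀ x y : V,
      (if G.Adj x y then w x y * ((u y + a * v y) - (u x + a * v x)) ^ 2 else 0)
        = (if G.Adj x y then w x y * (u y - u x) ^ 2 else 0)
          + 2 * a * (if G.Adj x y then w x y * (u y - u x) * (v y - v x) else 0)
          + a ^ 2 * (if G.Adj x y then w x y * (v y - v x) ^ 2 else 0) := by
    intro x y
    split_ifs <;> ring
  simp only [key, Finset.sum_add_distrib, ← Finset.mul_sum]
  ring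

lemma bInner_expand (B : Set V) (m : V → ℝ) (u v : V → ℝ) (a : ℝ) :
    bInner B m (fun x => u x + a * v x) (fun x => u x + a * v x)
      = bInner B m u u + 2 * a * bInner B m u v + a ^ 2 * bInner B m v v := by
  unfold bInner
  have key : ∀ x : V,
      (if x ∈ B then (u x + a * v x) * (u x + a * v x) * m x else 0)
        = (if x ∈ B then u x * u x * m x else 0)
          + 2 * a * (if x ∈ B then u x * v x * m x else 0)
          + a ^ 2 * (if x ∈ B then v x * v x * m x else 0) := by
    intro x
    split_ifs <;> ring
  simp only [key, Finset.sum_add_distrib, ← Finset.mul_sum]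

lemma bInner_add_right (B : Set V) (m : V → ℝ) (h u v : V → ℝ) (a : ℝ) :
    bInner B m h (fun x => u x + a * v x) = bInner B m h u + a * bInner B m h v := by
  unfold bInner
  have key : ∀ x : V,
      (if x ∈ B then h x * (u x + a * v x) * m x else 0)
        = (if x ∈ B then h x * u x * m x else 0) + a * (if x ∈ B then h x * v x * m x else 0) := by
    intro x; split_ifs <;> ring
  simp only [key, Finset.sum_add_distrib, ← Finset.mul_sum]

lemma energy_affine (G : SimpleGraph V) (w : V → V → ℝ) (v : V → ℝ) (a b : ℝ) :
    energy G w (fun x => a + b * v x) = b ^ 2 * energy G w v := by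
  unfold energy
  have key : ∀ x y : V,
      (if G.Adj x y then w x y * ((a + b * v y) - (a + b * v x)) ^ 2 else 0)
        = b ^ 2 * (if G.Adj x y then w x y * (v y - v x) ^ 2 else 0) := by
    intro x y; split_ifs <;> ring
  simp only []
  simp only [key, ← Finset.mul_sum]
  ring

lemma energy_smul (G : SimpleGraph V) (w : V → V → ℝ) (v : V → ℝ) (b : ℝ) :
    energy G w (fun x => b * v x) = b ^ 2 * energy G w v := by
  have := energy_affine G w v 0 b
  simpa using this

lemma bInner_smul (B : Set V) (m : V → ℝ) (v : V → ℝ) (b : ℝ) :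
    bInner B m (fun x => b * v x) (fun x => b * v x) = b ^ 2 * bInner B m v v := by
  unfold bInner
  rw [Finset.mul_sum]
  refine Finset.sum_congr rfl fun x _ => ?_
  split_ifs <;> ring

lemma bInner_smul_right (B : Set V) (m : V → ℝ) (h v : V → ℝ) (b : ℝ) :
    bInner B m h (fun x => b * v x) = b * bInner B m h v := by
  unfold bInner
  rw [Finset.mul_sum]
  refine Finset.sum_congr rfl fun x _ => ?_
  split_ifs <;> ring

/-- Green's formula. -/
lemma ebil_green {G : SimpleGraph V} {m : V → ℝ} {w : V → V → ℝ}
    (hw : ∀ x y, w x y = w y x) (hm : ∀ x, m x ≠ 0) (u v : V → ℝ) :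
    ebil G w u v = ∑ x : V, (- lap G m w u x) * v x * m x := by
  unfold ebil lap
  have rhs : ∀ x : V, (-((∑ y : V, if G.Adj x y then w x y * (u y - u x) else 0) / m x)) * v x * m x
      = ∑ y : V, if G.Adj x y then w x y * (u x - u y) * v x else 0 := by
    intro x
    have h1 : (∑ y : V, if G.Adj x y then w x y * (u x - u y) * v x else 0)
        = (-(∑ y : V, if G.Adj x y then w x y * (u y - u x) else 0)) * v x := by
      rw [neg_mul, Finset.sum_mul, ← Finset.sum_neg_distrib]
      refine Finset.sum_congr rfl fun y _ => ?_
      split_ifs <;> ring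
    rw [h1]
    field_simp
    rw [mul_right_comm, mul_div_cancel_right₀ _ (hm x)]
  simp only [rhs]
  rw [eq_comm, eq_div_iff (two_ne_zero)]
  have swap : (∑ x : V, ∑ y : V, if G.Adj x y then w x y * (u y - u x) * (v y - v x) else 0)
      = (∑ x : V, ∑ y : V, if G.Adj x y then w x y * (u y - u x) * v y else 0)
        - (∑ x : V, ∑ y : V, if G.Adj x y then w x y * (u y - u x) * v x else 0) := by
    rw [← Finset.sum_sub_distrib]
    refine Finset.sum_congr rfl fun x _ => ?_
    rw [← Finset.sum_sub_distrib]
    refine Finset.sum_congr rfl fun y _ => ?_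
    split_ifs <;> ring
  have comm : (∑ x : V, ∑ y : V, if G.Adj x y then w x y * (u y - u x) * v y else 0)
      = ∑ x : V, ∑ y : V, if G.Adj x y then w x y * (u x - u y) * v x else 0 := by
    rw [Finset.sum_comm]
    refine Finset.sum_congr rfl fun x _ => Finset.sum_congr rfl fun y _ => ?_
    by_cases h : G.Adj y x
    · rw [if_pos h, if_pos h.symm, hw y x]
    · rw [if_neg h, if_neg fun hc => h hc.symm]
  have neg2 : (∑ x : V, ∑ y : V, if G.Adj x y then w x y * (u y - u x) * v x else 0)
      = - ∑ x : V, ∑ y : V, if G.Adj x y then w x y * (u x - u y) * v x else 0 := by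
    rw [← Finset.sum_neg_distrib]
    refine Finset.sum_congr rfl fun x _ => ?_
    rw [← Finset.sum_neg_distrib]
    refine Finset.sum_congr rfl fun y _ => ?_
    split_ifs <;> ring
  rw [swap, comm, neg2]
  ring

lemma ebil_const_right (G : SimpleGraph V) (w : V → V → ℝ) (u : V → ℝ) (c : ℝ) :
    ebil G w u (fun _ => c) = 0 := by
  unfold ebil
  rw [div_eq_zero_iff]
  left
  refine Finset.sum_eq_zero fun x _ => Finset.sum_eq_zero fun y _ => ?_
  split_ifs <;> ring

lemma ebil_shift_right (G : SimpleGraph V) (w : V → V → ℝ) (u v : V → ℝ) (c : ℝ) :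
    ebil G w u (fun x => v x + c) = ebil G w u v := by
  unfold ebil
  congr 1
  refine Finset.sum_congr rfl fun x _ => Finset.sum_congr rfl fun y _ => ?_
  split_ifs <;> ring

/-- functions with zero energy are constant on connected components -/
lemma const_of_energy_zero {G : SimpleGraph V} {w : V → V → ℝ}
    (hw : ∀ x y, G.Adj x y → 0 < w x y) {u : V → ℝ} (h : energy G w u = 0)
    {x y : V} (hr : G.Reachable x y) : u x = u y := by
  have hadj : ∀ a b : V, G.Adj a b → u a = u b := by
    have hsum : (∑ a : V, ∑ b : V, if G.Adj a b then w a b * (u b - u a) ^ 2 else 0) = 0 := by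
      unfold energy at h
      field_simp at h
      linarith [h]
    have hterm : ∀ a ∈ Finset.univ (α := V), (∑ b : V, if G.Adj a b then w a b * (u b - u a) ^ 2 else 0) = 0 := by
      rw [← Finset.sum_eq_zero_iff_of_nonneg]
      · exact hsum
      · intro a _
        refine Finset.sum_nonneg fun b _ => ?_
        split_ifs with hab
        · exact mul_nonneg (hw a b hab).le (sq_nonneg _)
        · exact le_refl 0
    intro a b hab
    have h2 : ∀ b' ∈ Finset.univ (α := V), (if G.Adj a b' then w a b' * (u b' - u a) ^ 2 else 0) = 0 := by
      rw [← Finset.sum_eq_zero_iff_of_nonneg]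
      · exact hterm a (Finset.mem_univ a)
      · intro b' _
        split_ifs with hab'
        · exact mul_nonneg (hw a b' hab').le (sq_nonneg _)
        · exact le_refl 0
    have h3 := h2 b (Finset.mem_univ b)
    rw [if_pos hab] at h3
    have h4 : (u b - u a) ^ 2 = 0 := by
      rcases mul_eq_zero.mp h3 with h5 | h5
      · exact absurd h5 (hw a b hab).ne'
      · exact h5
    have := pow_eq_zero_iff (n := 2) (by norm_num) |>.mp h4
    linarith
  obtain ⟨p⟩ := hr
  induction p with
  | nil => rfl
  | cons hadj' p ih => exact (hadj _ _ hadj').trans ih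

lemma eigen_green {G : SimpleGraph V} {B : Set V} {m : V → ℝ} {w : V → V → ℝ} {σ : ℝ} {f : V → ℝ}
    (hw : ∀ x y, w x y = w y x) (hm : ∀ x, m x ≠ 0)
    (hΩ : ∀ x, x ∉ B → lap G m w f x = 0) (hB : ∀ x ∈ B, - lap G m w f x = σ * f x)
    (v : V → ℝ) : ebil G w f v = σ * bInner B m f v := by
  rw [ebil_green hw hm]
  unfold bInner
  rw [Finset.mul_sum]
  refine Finset.sum_congr rfl fun x _ => ?_
  by_cases hx : x ∈ B
  · rw [if_pos hx, hB x hx]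
    ring
  · rw [if_neg hx, hΩ x hx]
    ring

lemma quad_coeff_zero {a b : ℝ} (ha : 0 ≤ a) (h : ∀ t : ℝ, 0 ≤ a * t ^ 2 + b * t) : b = 0 := by
  by_contra hb
  have h1 := h (-(b / (a + 1)))
  have hpos : (0:ℝ) < a + 1 := by linarith
  have e : a * (-(b / (a + 1))) ^ 2 + b * (-(b / (a + 1))) = -(b ^ 2) / (a + 1) ^ 2 := by
    field_simp
    ring
  rw [e] at h1
  have hb2 : 0 < b ^ 2 := by positivity
  have hp2 : (0:ℝ) < (a + 1) ^ 2 := by positivity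
  have : -(b ^ 2) / (a + 1) ^ 2 < 0 := by
    apply div_neg_of_neg_of_pos _ hp2
    linarith
  linarith

/-- every element of the min-max set for `i = 2` is at least any variational lower bound -/
lemma steklov_set_ge {G : SimpleGraph V} {B : Set V} {m : V → ℝ} {w : V → V → ℝ}
    (hm : ∀ x, 0 < m x) {c : ℝ}
    (hc : ∀ v : V → ℝ, bInner B m (fun _ => 1) v = 0 → (∃ x ∈ B, v x ≠ 0) →
      c * bInner B m v v ≤ energy G w v) :
    ∀ σ' ∈ {σ : ℝ | ∃ E : Submodule ℝ (V → ℝ), Module.finrank ℝ E = 2 ∧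
      (∀ u ∈ E, (∀ x ∈ B, u x = 0) → u = 0) ∧
      ∀ u ∈ E, energy G w u ≤ σ * bInner B m u u}, c ≤ σ' := by
  rintro σ' ⟨E, hrank, hinj, hbound⟩
  have hadd : ∀ v v' : V → ℝ, bInner B m (fun _ => 1) (v + v')
      = bInner B m (fun _ => 1) v + bInner B m (fun _ => 1) v' := by
    intro v v'
    unfold bInner
    rw [← Finset.sum_add_distrib]
    refine Finset.sum_congr rfl fun x _ => ?_
    by_cases h : x ∈ B <;> simp [h, Pi.add_apply] <;> ring
  have hsmul : ∀ (a : ℝ) (v : V → ℝ), bInner B m (fun _ => 1) (a • v)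
      = a * bInner B m (fun _ => 1) v := by
    intro a v
    unfold bInner
    rw [Finset.mul_sum]
    refine Finset.sum_congr rfl fun x _ => ?_
    by_cases h : x ∈ B <;> simp [h, Pi.smul_apply, smul_eq_mul] <;> ring
  let ℓ : (V → ℝ) →ₗ[ℝ] ℝ :=
    { toFun := fun v => bInner B m (fun _ => 1) v
      map_add' := hadd
      map_smul' := hsmul }
  obtain ⟨u, huE, hu0, humean⟩ : ∃ u ∈ E, u ≠ 0 ∧ ℓ u = 0 := by
    by_contra hcon
    push_neg at hcon
    have hkinj : Function.Injective (ℓ.comp E.subtype) := by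
      rw [← LinearMap.ker_eq_bot, Submodule.eq_bot_iff]
      rintro ⟨z, hz⟩ hz0
      simp only [LinearMap.mem_ker, LinearMap.comp_apply, Submodule.subtype_apply] at hz0
      by_contra hne
      have hz0' : z ≠ 0 := by
        intro hzz
        exact hne (Subtype.ext hzz)
      exact hcon z hz hz0' hz0
    have hle := LinearMap.finrank_le_finrank_of_injective hkinj
    rw [hrank, Module.finrank_self] at hle
    omega
  have hub : ∃ x ∈ B, u x ≠ 0 := by
    by_contra hcb
    push_neg at hcb
    exact hu0 (hinj u huE hcb)
  obtain ⟨x, hx, hux⟩ := hub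
  have humean' : bInner B m (fun _ => 1) u = 0 := humean
  have hp : 0 < bInner B m u u := bInner_pos hm hx hux
  have h1 := hc u humean' ⟨x, hx, hux⟩
  have h2 := hbound u huE
  nlinarith

/-- membership of a Rayleigh quotient of a boundary-mean-zero function in the min-max set -/
lemma ratio_mem {G : SimpleGraph V} {B : Set V} {m : V → ℝ} {w : V → V → ℝ}
    (hm : ∀ x, 0 < m x) (hw0 : ∀ x y, G.Adj x y → 0 ≤ w x y) {v : V → ℝ}
    (hmean : bInner B m (fun _ => 1) v = 0) (hvB : ∃ x ∈ B, v x ≠ 0) :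
    (energy G w v / bInner B m v v) ∈ {σ : ℝ | ∃ E : Submodule ℝ (V → ℝ),
      Module.finrank ℝ E = 2 ∧
      (∀ u ∈ E, (∀ x ∈ B, u x = 0) → u = 0) ∧
      ∀ u ∈ E, energy G w u ≤ σ * bInner B m u u} := by
  obtain ⟨x, hx, hvx⟩ := hvB
  have hp : 0 < bInner B m v v := bInner_pos hm hx hvx
  have hq : 0 ≤ energy G w v := energy_nonneg hw0 v
  have hr0 : 0 ≤ energy G w v / bInner B m v v := div_nonneg hq hp.le
  have hmB : 0 < bInner B m (fun _ => (1:ℝ)) (fun _ => (1:ℝ)) :=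
    bInner_pos hm hx one_ne_zero
  have haffval : ∀ a b : ℝ, bInner B m (fun _ => 1) (fun z => a + b * v z)
      = a * bInner B m (fun _ => (1:ℝ)) (fun _ => (1:ℝ)) + b * bInner B m (fun _ => 1) v := by
    intro a b
    unfold bInner
    rw [Finset.mul_sum, Finset.mul_sum, ← Finset.sum_add_distrib]
    refine Finset.sum_congr rfl fun z _ => ?_
    by_cases h : z ∈ B <;> simp [h] <;> ring
  have hbaff : ∀ a b : ℝ, bInner B m (fun z => a + b * v z) (fun z => a + b * v z)
      = a ^ 2 * bInner B m (fun _ => (1:ℝ)) (fun _ => (1:ℝ))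
        + 2 * a * b * bInner B m (fun _ => 1) v + b ^ 2 * bInner B m v v := by
    intro a b
    unfold bInner
    rw [Finset.mul_sum, Finset.mul_sum, Finset.mul_sum, ← Finset.sum_add_distrib,
      ← Finset.sum_add_distrib]
    refine Finset.sum_congr rfl fun z _ => ?_
    by_cases h : z ∈ B <;> simp [h] <;> ring
  refine ⟨Submodule.span ℝ {(fun _ => (1:ℝ)), v}, ?_, ?_, ?_⟩
  · have hli : LinearIndependent ℝ ![(fun _ => (1:ℝ)), v] := by
      rw [LinearIndependent.pair_iff]
      intro s t hst
      have hfun : ∀ z, s + t * v z = 0 := by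
        intro z
        have := congrFun hst z
        simpa [Pi.add_apply, Pi.smul_apply, smul_eq_mul] using this
      have hzero : (fun z => s + t * v z) = (fun _ => (0:ℝ)) := funext hfun
      have h1 : bInner B m (fun _ => 1) (fun z => s + t * v z) = 0 := by
        rw [hzero]
        unfold bInner
        refine Finset.sum_eq_zero fun z _ => ?_
        split_ifs <;> ring
      rw [haffval, hmean, mul_zero, add_zero] at h1
      have hs : s = 0 := by
        rcases mul_eq_zero.mp h1 with h | h
        · exact h
        · exact absurd h hmB.ne'
      refine ⟨hs, ?_⟩
      have := hfun x
      rw [hs, zero_add] at this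
      rcases mul_eq_zero.mp this with h | h
      · exact h
      · exact absurd h hvx
    have hrange : Set.range ![(fun _ => (1:ℝ)), v] = {(fun _ => (1:ℝ)), v} := by
      ext g
      simp [Fin.exists_fin_two]
      tauto
    have h := finrank_span_eq_card hli
    rw [hrange] at h
    rw [h]
    simp
  · intro u huE hub0
    obtain ⟨a, b, hab⟩ := Submodule.mem_span_pair.mp huE
    have hu : ∀ z, a + b * v z = u z := by
      intro z
      have := congrFun hab z
      simpa [Pi.add_apply, Pi.smul_apply, smul_eq_mul] using this
    have hmu : bInner B m (fun _ => 1) u = 0 := by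
      unfold bInner
      refine Finset.sum_eq_zero fun z _ => ?_
      split_ifs with hz
      · rw [hub0 z hz]; ring
      · rfl
    have h1 : bInner B m (fun _ => 1) (fun z => a + b * v z) = 0 := by
      rw [funext hu]; exact hmu
    rw [haffval, hmean, mul_zero, add_zero] at h1
    have ha : a = 0 := by
      rcases mul_eq_zero.mp h1 with h | h
      · exact h
      · exact absurd h hmB.ne'
    have hb : b = 0 := by
      have h2 := hu x
      rw [ha, zero_add, hub0 x hx] at h2
      rcases mul_eq_zero.mp h2 with h | h
      · exact h
      · exact absurd h hvx
    rw [← hab, ha, hb]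
    simp
  · intro u huE
    obtain ⟨a, b, hab⟩ := Submodule.mem_span_pair.mp huE
    have hu : u = fun z => a + b * v z := by
      rw [← hab]
      funext z
      simp [Pi.add_apply, Pi.smul_apply, smul_eq_mul]
    rw [hu, energy_affine, hbaff, hmean]
    have key : b ^ 2 * energy G w v = (energy G w v / bInner B m v v) * (b ^ 2 * bInner B m v v) := by
      field_simp
    rw [key]
    have h2 : 0 ≤ a ^ 2 * bInner B m (fun _ => (1:ℝ)) (fun _ => (1:ℝ)) := by positivity
    nlinarith [hr0, sq_nonneg b]

/-- a boundary-mean-zero function with nonvanishing boundary data exists when `|B| >= 2`. -/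
lemma exists_meanzero {B : Set V} {m : V → ℝ} (hm : ∀ x, 0 < m x)
    {x y : V} (hx : x ∈ B) (hy : y ∈ B) (hxy : x ≠ y) :
    ∃ v : V → ℝ, bInner B m (fun _ => 1) v = 0 ∧ v x ≠ 0 := by
  refine ⟨fun t => if t = x then m y else if t = y then -(m x) else 0, ?_, ?_⟩
  · unfold bInner
    rw [← Finset.sum_subset (Finset.subset_univ ({x, y} : Finset V))]
    · rw [Finset.sum_pair hxy, if_pos hx, if_pos hy]
      have hvy : (if y = x then m y else if y = y then -(m x) else 0) = -(m x) := by
        rw [if_neg (fun h => hxy h.symm), if_pos rfl]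
      beta_reduce
      rw [if_pos rfl, hvy]
      ring
    · intro t _ ht
      simp only [Finset.mem_insert, Finset.mem_singleton] at ht
      push_neg at ht
      beta_reduce
      rw [if_neg ht.1, if_neg ht.2]
      split_ifs <;> ring
  · simp [(hm y).ne']

/-- the variational inequality for `σ₂` against any boundary-mean-zero test function -/
lemma steklov2_le {G : SimpleGraph V} {B : Set V} {m : V → ℝ} {w : V → V → ℝ}
    (hm : ∀ x, 0 < m x) (hw0 : ∀ x y, G.Adj x y → 0 ≤ w x y)
    (hσ0 : 0 ≤ steklov G B m w 2) {v : V → ℝ}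
    (hmean : bInner B m (fun _ => 1) v = 0) :
    steklov G B m w 2 * bInner B m v v ≤ energy G w v := by
  by_cases hvB : ∃ x ∈ B, v x ≠ 0
  · obtain ⟨x, hx, hvx⟩ := hvB
    have hp : 0 < bInner B m v v := bInner_pos hm hx hvx
    have hmem := ratio_mem (G := G) (w := w) hm hw0 hmean ⟨x, hx, hvx⟩
    have hbdd : BddBelow {σ : ℝ | ∃ E : Submodule ℝ (V → ℝ), Module.finrank ℝ E = 2 ∧
        (∀ u ∈ E, (∀ x ∈ B, u x = 0) → u = 0) ∧
        ∀ u ∈ E, energy G w u ≤ σ * bInner B m u u} := by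
      refine ⟨0, fun σ' hσ' => ?_⟩
      refine steklov_set_ge hm (c := 0) (fun v' _ _ => ?_) σ' hσ'
      rw [zero_mul]
      exact energy_nonneg hw0 v'
    have hle : steklov G B m w 2 ≤ energy G w v / bInner B m v v := by
      unfold steklov
      exact csInf_le hbdd hmem
    calc steklov G B m w 2 * bInner B m v v
        ≤ (energy G w v / bInner B m v v) * bInner B m v v := by
          exact mul_le_mul_of_nonneg_right hle (bInner_nonneg B hm v)
      _ = energy G w v := by field_simp
  · push_neg at hvB
    have hp : bInner B m v v = 0 := by
      unfold bInner
      refine Finset.sum_eq_zero fun z _ => ?_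
      split_ifs with hz
      · rw [hvB z hz]; ring
      · rfl
    rw [hp, mul_zero]
    exact energy_nonneg hw0 v

/-- lower bound for `σ₂` from a uniform variational lower bound -/
lemma le_steklov2 {G : SimpleGraph V} {B : Set V} {m : V → ℝ} {w : V → V → ℝ}
    (hm : ∀ x, 0 < m x) (hw0 : ∀ x y, G.Adj x y → 0 ≤ w x y)
    {x y : V} (hx : x ∈ B) (hy : y ∈ B) (hxy : x ≠ y) {c : ℝ}
    (hc : ∀ v : V → ℝ, bInner B m (fun _ => 1) v = 0 → (∃ x ∈ B, v x ≠ 0) →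
      c * bInner B m v v ≤ energy G w v) :
    c ≤ steklov G B m w 2 := by
  unfold steklov
  apply le_csInf
  · obtain ⟨v₀, hmean₀, hv₀x⟩ := exists_meanzero hm hx hy hxy
    exact ⟨_, ratio_mem (G := G) (w := w) hm hw0 hmean₀ ⟨x, hx, hv₀x⟩⟩
  · exact steklov_set_ge hm hc

lemma lap_neg (G : SimpleGraph V) (m : V → ℝ) (w : V → V → ℝ) (f : V → ℝ) (x : V) :
    lap G m w (fun t => -(f t)) x = - lap G m w f x := by
  unfold lap
  rw [← neg_div]
  congr 1
  rw [← Finset.sum_neg_distrib]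
  refine Finset.sum_congr rfl fun y _ => ?_
  split_ifs <;> ring

/-- variational minimizers are eigenfunctions -/
lemma minimizer_eigen {G : SimpleGraph V} {B : Set V} {m : V → ℝ} {w : V → V → ℝ} {σ : ℝ}
    (hwsym : ∀ x y, w x y = w y x) (hm : ∀ x, 0 < m x) {b₀ : V} (hb₀ : b₀ ∈ B)
    (hvar : ∀ v : V → ℝ, bInner B m (fun _ => 1) v = 0 → σ * bInner B m v v ≤ energy G w v)
    {u : V → ℝ} (humean : bInner B m (fun _ => 1) u = 0)
    (hueq : energy G w u = σ * bInner B m u u) :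
    (∀ x, x ∉ B → lap G m w u x = 0) ∧ (∀ x ∈ B, - lap G m w u x = σ * u x) := by
  have hmB : 0 < bInner B m (fun _ => (1:ℝ)) (fun _ => (1:ℝ)) :=
    bInner_pos hm hb₀ one_ne_zero
  have humean1 : bInner B m u (fun _ => (1:ℝ)) = 0 := by
    rw [bInner_comm]; exact humean
  have hmz : ∀ v : V → ℝ, bInner B m (fun _ => 1) v = 0 →
      ebil G w u v = σ * bInner B m u v := by
    intro v hv
    have hq : ∀ t : ℝ, 0 ≤ (energy G w v - σ * bInner B m v v) * t ^ 2
        + (2 * (ebil G w u v - σ * bInner B m u v)) * t := by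
      intro t
      have hmean' : bInner B m (fun _ => 1) (fun x => u x + t * v x) = 0 := by
        rw [bInner_add_right, humean, hv]
        ring
      have h1 := hvar _ hmean'
      rw [energy_expand, bInner_expand, hueq] at h1
      nlinarith [h1]
    have hA : 0 ≤ energy G w v - σ * bInner B m v v := by
      have := hvar v hv
      linarith
    have := quad_coeff_zero hA hq
    linarith
  have hall : ∀ v : V → ℝ, ebil G w u v = σ * bInner B m u v := by
    intro v
    set c := bInner B m (fun _ => 1) v / bInner B m (fun _ => (1:ℝ)) (fun _ => (1:ℝ)) with hc
    have hv' : bInner B m (fun _ => 1) (fun x => v x + (-c) * 1) = 0 := by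
      have e1 : bInner B m (fun _ => 1) (fun x => v x + (-c) * (fun _ => (1:ℝ)) x)
          = bInner B m (fun _ => 1) v + (-c) * bInner B m (fun _ => (1:ℝ)) (fun _ => (1:ℝ)) :=
        bInner_add_right B m (fun _ => 1) v (fun _ => (1:ℝ)) (-c)
      calc bInner B m (fun _ => 1) (fun x => v x + (-c) * 1)
          = bInner B m (fun _ => 1) v + (-c) * bInner B m (fun _ => (1:ℝ)) (fun _ => (1:ℝ)) := e1
        _ = 0 := by
            rw [hc]
            field_simp
            ring
    have h2 := hmz _ hv'
    have e2 : ebil G w u (fun x => v x + (-c) * 1) = ebil G w u v := by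
      have h := ebil_shift_right G w u v (-c)
      have e : (fun x => v x + (-c) * 1) = (fun x => v x + (-c)) := by
        funext t
        ring
      rw [e]
      exact h
    have e3 : bInner B m u (fun x => v x + (-c) * 1)
        = bInner B m u v + (-c) * bInner B m u (fun _ => (1:ℝ)) :=
      bInner_add_right B m u v (fun _ => (1:ℝ)) (-c)
    rw [e2] at h2
    rw [e3, humean1, mul_zero, add_zero] at h2
    exact h2
  have hmain : ∀ z : V, (- lap G m w u z) * m z
      = σ * (if z ∈ B then u z * m z else 0) := by
    intro z
    have hδ := hall (fun t => if t = z then (1:ℝ) else 0)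
    have hg := ebil_green (G := G) hwsym (fun x => (hm x).ne') u (fun t => if t = z then (1:ℝ) else 0)
    have hcollapse : (∑ x : V, (- lap G m w u x) * (if x = z then (1:ℝ) else 0) * m x)
        = (- lap G m w u z) * m z := by
      rw [Finset.sum_eq_single z]
      · rw [if_pos rfl]; ring
      · intro b _ hb
        rw [if_neg hb]; ring
      · intro h
        exact absurd (Finset.mem_univ z) h
    have hbcollapse : bInner B m u (fun t => if t = z then (1:ℝ) else 0)
        = (if z ∈ B then u z * m z else 0) := by
      unfold bInner
      rw [Finset.sum_eq_single z]
      · beta_reduce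
        rw [if_pos rfl]
        split_ifs <;> ring
      · intro b _ hb
        beta_reduce
        rw [if_neg hb]
        split_ifs <;> ring
      · intro h
        exact absurd (Finset.mem_univ z) h
    rw [hg, hcollapse, hbcollapse] at hδ
    exact hδ
  constructor
  · intro x hx
    have := hmain x
    rw [if_neg hx, mul_zero] at this
    have hm0 := (hm x).ne'
    rcases mul_eq_zero.mp this with h | h
    · linarith [h]
    · exact absurd h hm0
  · intro x hx
    have := hmain x
    rw [if_pos hx] at this
    have : (- lap G m w u x) * m x = (σ * u x) * m x := by
      rw [this]; ring
    exact mul_right_cancel₀ (hm x).ne' this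

/-- energy inequality for the positive part of a function -/
lemma pos_part_energy {G : SimpleGraph V} {w : V → V → ℝ}
    (hw0 : ∀ x y, G.Adj x y → 0 ≤ w x y) (φ : V → ℝ) :
    energy G w (fun x => max (φ x) 0) ≤ ebil G w φ (fun x => max (φ x) 0) := by
  have key : ∀ a b : ℝ, (max b 0 - max a 0) ^ 2 ≤ (b - a) * (max b 0 - max a 0) := by
    intro a b
    rcases le_total a 0 with ha | ha <;> rcases le_total b 0 with hb | hb
    · rw [max_eq_right ha, max_eq_right hb]
      simp
    · rw [max_eq_right ha, max_eq_left hb]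
      nlinarith
    · rw [max_eq_left ha, max_eq_right hb]
      nlinarith
    · rw [max_eq_left ha, max_eq_left hb]
      nlinarith
  unfold energy ebil
  rw [div_le_div_iff_of_pos_right two_pos]
  refine Finset.sum_le_sum fun x _ => ?_
  refine Finset.sum_le_sum fun y _ => ?_
  split_ifs with h
  · beta_reduce
    have h1 := key (φ x) (φ y)
    have h2 := hw0 x y h
    nlinarith
  · exact le_refl 0

lemma eigen_facts {G : SimpleGraph V} {B : Set V} {m : V → ℝ} {w : V → V → ℝ} {σ : ℝ} {f : V → ℝ}
    (hwsym : ∀ x y, w x y = w y x) (hm : ∀ x, 0 < m x)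
    (hwpos : ∀ x y, G.Adj x y → 0 < w x y) (hcon : G.Connected)
    {b₀ : V} (hb₀ : b₀ ∈ B) (hσ : 0 < σ)
    (hf : IsSteklovEigenfun G B m w σ f) :
    bInner B m (fun _ => 1) f = 0 ∧ energy G w f = σ * bInner B m f f ∧ ∃ x ∈ B, f x ≠ 0 := by
  obtain ⟨hf0, hΩ, hBeq⟩ := hf
  have hg := eigen_green hwsym (fun x => (hm x).ne') hΩ hBeq
  have hE : energy G w f = σ * bInner B m f f := by
    rw [← ebil_self]
    exact hg f
  have hmean : bInner B m (fun _ => 1) f = 0 := by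
    have h1 := hg (fun _ => (1:ℝ))
    rw [ebil_const_right] at h1
    have h2 : bInner B m f (fun _ => (1:ℝ)) = 0 := by
      rcases mul_eq_zero.mp h1.symm with h | h
      · exact absurd h hσ.ne'
      · exact h
    rw [bInner_comm] at h2
    exact h2
  refine ⟨hmean, hE, ?_⟩
  by_contra hc
  push_neg at hc
  have hp : bInner B m f f = 0 := by
    unfold bInner
    refine Finset.sum_eq_zero fun z _ => ?_
    split_ifs with hz
    · rw [hc z hz]; ring
    · rfl
  have hq : energy G w f = 0 := by rw [hE, hp, mul_zero]
  apply hf0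
  funext z
  have := const_of_energy_zero hwpos hq (hcon.preconnected z b₀)
  rw [Pi.zero_apply, this, hc b₀ hb₀]

/-- a positive uniform variational lower bound (discrete Poincaré inequality) -/
lemma exists_pos_lower_bound {G : SimpleGraph V} {B : Set V} {m : V → ℝ} {w : V → V → ℝ}
    (hcon : G.Connected) (hm : ∀ x, 0 < m x) (hwpos : ∀ x y, G.Adj x y → 0 < w x y)
    {x y : V} (hx : x ∈ B) (hy : y ∈ B) (hxy : x ≠ y) :
    ∃ μ : ℝ, 0 < μ ∧ ∀ v : V → ℝ, bInner B m (fun _ => 1) v = 0 →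
      μ * bInner B m v v ≤ energy G w v := by
  have hw0 : ∀ a b, G.Adj a b → 0 ≤ w a b := fun a b h => (hwpos a b h).le
  haveI : Nonempty V := ⟨x⟩
  set p : (V → ℝ) → ℝ := fun v => bInner B m v v with hpdef
  set q : (V → ℝ) → ℝ := fun v => energy G w v with hqdef
  set l : (V → ℝ) → ℝ := fun v => bInner B m (fun _ => 1) v with hldef
  have cont_p : Continuous p := by
    apply continuous_finset_sum
    intro i _
    by_cases h : i ∈ B <;> simp only [h, if_true, if_false] <;> fun_prop
  have cont_q : Continuous q := by
    apply Continuous.div_const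
    apply continuous_finset_sum
    intro i _
    apply continuous_finset_sum
    intro j _
    by_cases h : G.Adj i j <;> simp only [h, if_true, if_false] <;> fun_prop
  have cont_l : Continuous l := by
    apply continuous_finset_sum
    intro i _
    by_cases h : i ∈ B <;> simp only [h, if_true, if_false] <;> fun_prop
  have hq0 : ∀ v, 0 ≤ q v := fun v => energy_nonneg hw0 v
  have hp0 : ∀ v, 0 ≤ p v := fun v => bInner_nonneg B hm v
  have hmB : 0 < bInner B m (fun _ => (1:ℝ)) (fun _ => (1:ℝ)) := bInner_pos hm hx one_ne_zero
  -- constant functions detection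
  have hconst_zero : ∀ v : V → ℝ, q v = 0 → l v = 0 → v = 0 := by
    intro v hqv hlv
    have hcst : ∀ z : V, v z = v x := fun z =>
      const_of_energy_zero hwpos hqv (hcon.preconnected z x)
    have hl2 : l v = v x * bInner B m (fun _ => (1:ℝ)) (fun _ => (1:ℝ)) := by
      simp only [hldef]
      unfold bInner
      rw [Finset.mul_sum]
      refine Finset.sum_congr rfl fun z _ => ?_
      split_ifs with h
      · rw [hcst z]; ring
      · ring
    rw [hl2] at hlv
    have hvx : v x = 0 := by
      rcases mul_eq_zero.mp hlv with h | h
      · exact h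
      · exact absurd h hmB.ne'
    funext z
    rw [Pi.zero_apply, hcst z, hvx]
  -- positivity of q + p on the unit sphere
  set Φ : (V → ℝ) → ℝ := fun v => q v + p v with hΦdef
  have contΦ : Continuous Φ := cont_q.add cont_p
  have hsph : IsCompact (Metric.sphere (0 : V → ℝ) 1) := isCompact_sphere _ _
  have hsne : (Metric.sphere (0 : V → ℝ) 1).Nonempty := NormedSpace.sphere_nonempty.mpr zero_le_one
  obtain ⟨vm, hvmem, hvmin⟩ := hsph.exists_isMinOn hsne contΦ.continuousOn
  set ε : ℝ := Φ vm with hεdef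
  have hΦ0 : ∀ v, 0 ≤ Φ v := fun v => add_nonneg (hq0 v) (hp0 v)
  have hεpos : 0 < ε := by
    rcases (hΦ0 vm).lt_or_eq with h | h
    · exact h
    · exfalso
      have hqm : q vm = 0 := by
        have := hq0 vm; have := hp0 vm
        simp only [hεdef, hΦdef] at h
        linarith
      have hpm : p vm = 0 := by
        have := hq0 vm; have := hp0 vm
        simp only [hεdef, hΦdef] at h
        linarith
      have hlm : l vm = 0 := by
        have hcst : ∀ z : V, vm z = vm x := fun z =>
          const_of_energy_zero hwpos hqm (hcon.preconnected z x)
        have hbz : ∀ z ∈ B, vm z = 0 := bInner_eq_zero hm hpm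
        have hvmx : vm x = 0 := hbz x hx
        simp only [hldef]
        unfold bInner
        refine Finset.sum_eq_zero fun z _ => ?_
        split_ifs with h'
        · rw [hbz z h']; ring
        · rfl
      have hvm0 : vm = 0 := hconst_zero vm hqm hlm
      have : ‖vm‖ = 1 := by
        have := hvmem
        simp only [Metric.mem_sphere, dist_zero_right] at this
        exact this
      rw [hvm0] at this
      simp at this
  -- homogeneity
  have hΦsmul : ∀ (c : ℝ) (v : V → ℝ), Φ (fun t => c * v t) = c ^ 2 * Φ v := by
    intro c v
    simp only [hΦdef, hqdef, hpdef]
    rw [energy_smul, bInner_smul]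
    ring
  have hhom : ∀ v : V → ℝ, ε * ‖v‖ ^ 2 ≤ Φ v := by
    intro v
    rcases eq_or_ne v 0 with rfl | hv0
    · simp only [norm_zero]
      rw [zero_pow (by norm_num), mul_zero]
      exact hΦ0 0
    · have hn : 0 < ‖v‖ := norm_pos_iff.mpr hv0
      set u : V → ℝ := fun t => ‖v‖⁻¹ * v t with hudef
      have husmul : u = ‖v‖⁻¹ • v := by
        funext t
        simp [hudef]
      have humem : u ∈ Metric.sphere (0 : V → ℝ) 1 := by
        simp only [Metric.mem_sphere, dist_zero_right, husmul, norm_smul, norm_inv,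
          norm_norm, Real.norm_eq_abs, abs_of_pos hn]
        rw [inv_mul_cancel₀ hn.ne']
      have h1 : ε ≤ Φ u := hvmin humem
      have h2 : Φ u = (‖v‖⁻¹) ^ 2 * Φ v := hΦsmul _ v
      rw [h2] at h1
      have h3 : (‖v‖⁻¹) ^ 2 * ‖v‖ ^ 2 = 1 := by
        field_simp
      have h4 := mul_le_mul_of_nonneg_right h1 (sq_nonneg ‖v‖)
      have h5 : ‖v‖⁻¹ ^ 2 * Φ v * ‖v‖ ^ 2 = Φ v := by
        rw [mul_right_comm, h3, one_mul]
      exact h5 ▸ h4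
  -- normalized witness
  obtain ⟨v₀, hmean₀, hv₀x⟩ := exists_meanzero hm hx hy hxy
  have hp₀ : 0 < p v₀ := bInner_pos hm hx hv₀x
  set v₁ : V → ℝ := fun t => (Real.sqrt (p v₀))⁻¹ * v₀ t with hv₁def
  have hsq : Real.sqrt (p v₀) ^ 2 = p v₀ := Real.sq_sqrt hp₀.le
  have hsqpos : 0 < Real.sqrt (p v₀) := Real.sqrt_pos.mpr hp₀
  have hpv₁ : p v₁ = 1 := by
    simp only [hpdef, hv₁def]
    rw [bInner_smul]
    rw [inv_pow]
    rw [hsq]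
    exact inv_mul_cancel₀ hp₀.ne'
  have hlv₁ : l v₁ = 0 := by
    simp only [hldef, hv₁def]
    rw [bInner_smul_right]
    rw [hmean₀, mul_zero]
  set C : ℝ := q v₁ with hCdef
  set S : Set (V → ℝ) := {v | l v = 0 ∧ p v = 1 ∧ q v ≤ C} with hSdef
  have hv₁S : v₁ ∈ S := ⟨hlv₁, hpv₁, le_refl _⟩
  have hSclosed : IsClosed S := by
    have h1 : IsClosed {v : V → ℝ | l v = 0} := isClosed_eq cont_l continuous_const
    have h2 : IsClosed {v : V → ℝ | p v = 1} := isClosed_eq cont_p continuous_const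
    have h3 : IsClosed {v : V → ℝ | q v ≤ C} := isClosed_le cont_q continuous_const
    exact h1.inter (h2.inter h3)
  have hSsub : S ⊆ Metric.closedBall (0 : V → ℝ) (Real.sqrt ((C + 1) / ε)) := by
    intro v hv
    obtain ⟨hlv, hpv, hqv⟩ := hv
    have hΦv : Φ v ≤ C + 1 := by
      simp only [hΦdef]
      rw [hpv]
      linarith
    have h1 := hhom v
    have h2 : ‖v‖ ^ 2 ≤ (C + 1) / ε := by
      rw [le_div_iff₀ hεpos]
      nlinarith
    simp only [Metric.mem_closedBall, dist_zero_right]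
    rw [← Real.sqrt_sq (norm_nonneg v)]
    exact Real.sqrt_le_sqrt h2
  have hScompact : IsCompact S :=
    IsCompact.of_isClosed_subset (isCompact_closedBall _ _) hSclosed hSsub
  obtain ⟨vs, hvsS, hvsmin⟩ := hScompact.exists_isMinOn ⟨v₁, hv₁S⟩ cont_q.continuousOn
  set μ : ℝ := q vs with hμdef
  have hμC : μ ≤ C := hvsmin hv₁S
  have hμpos : 0 < μ := by
    rcases (hq0 vs).lt_or_eq with h | h
    · exact h
    · exfalso
      have hqs : q vs = 0 := h.symm
      have hvs0 : vs = 0 := hconst_zero vs hqs hvsS.1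
      have : p vs = 1 := hvsS.2.1
      rw [hvs0] at this
      have hp00 : p (0 : V → ℝ) = 0 := by
        simp only [hpdef]
        unfold bInner
        refine Finset.sum_eq_zero fun z _ => ?_
        split_ifs <;> simp
      rw [hp00] at this
      norm_num at this
  refine ⟨μ, hμpos, ?_⟩
  intro v hmean
  rcases (hp0 v).lt_or_eq with hpv | hpv
  · -- normalize
    set u : V → ℝ := fun t => (Real.sqrt (p v))⁻¹ * v t with hudef
    have hsqv : Real.sqrt (p v) ^ 2 = p v := Real.sq_sqrt (hp0 v)
    have hsqvpos : 0 < Real.sqrt (p v) := Real.sqrt_pos.mpr hpv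
    have hpu : p u = 1 := by
      simp only [hpdef, hudef]
      rw [bInner_smul, inv_pow, hsqv]
      exact inv_mul_cancel₀ hpv.ne'
    have hlu : l u = 0 := by
      simp only [hldef, hudef]
      rw [bInner_smul_right]
      rw [hmean, mul_zero]
    have hqu : q u = (Real.sqrt (p v))⁻¹ ^ 2 * q v := by
      simp only [hqdef, hudef]
      rw [energy_smul]
    have hμu : μ ≤ q u := by
      by_cases hc : q u ≤ C
      · exact hvsmin ⟨hlu, hpu, hc⟩
      · push_neg at hc
        linarith
    rw [hqu, inv_pow, hsqv] at hμu
    have : μ * p v ≤ q v := by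
      rw [le_inv_mul_iff₀ hpv] at hμu
      linarith [hμu]
    exact this
  · have hbv : bInner B m v v = 0 := hpv.symm
    rw [hbv, mul_zero]
    exact hq0 v

/- ===== subtype sum conversions ===== -/

lemma single_sum_subtype {p : V → Prop} (g : V → ℝ) (hg : ∀ x, ¬ p x → g x = 0) :
    (∑ a : Subtype p, g ↑a) = ∑ x : V, g x := by
  have hs : ∀ x : V, x ∈ Finset.univ.filter p ↔ p x := by simp
  rw [← Finset.sum_subtype (Finset.univ.filter p) hs g]
  refine Finset.sum_subset (Finset.filter_subset _ _) ?_
  intro x _ hx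
  refine hg x fun hc => hx ?_
  simp [hc]

lemma double_sum_subtype {p : V → Prop} (g : V → V → ℝ)
    (hg : ∀ x y, ¬ (p x ∧ p y) → g x y = 0) :
    (∑ a : Subtype p, ∑ b : Subtype p, g ↑a ↑b) = ∑ x : V, ∑ y : V, g x y := by
  have h1 : (∑ a : Subtype p, ∑ b : Subtype p, g ↑a ↑b)
      = ∑ a : Subtype p, ∑ y : V, g ↑a y := by
    refine Finset.sum_congr rfl fun a _ => ?_
    exact single_sum_subtype (fun y => g ↑a y) (fun y hy => hg _ y (fun hc => hy hc.2))
  rw [h1]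
  exact single_sum_subtype (fun x => ∑ y : V, g x y)
    (fun x hx => Finset.sum_eq_zero fun y _ => hg x y (fun hc => hx hc.1))

/- ===== comb and tooth structure ===== -/

section Tooth

variable {Gt : SimpleGraph V} {H : Gt.Subgraph}

/-- the unique vertex of `H` in the tooth of `v` -/
def rep (hcomb : IsComb Gt H) : V → H.verts :=
  fun v => (Equiv.ofBijective _ hcomb).symm ((Gt.deleteEdges H.edgeSet).connectedComponentMk v)

lemma cc_rep (hcomb : IsComb Gt H) (v : V) :
    (Gt.deleteEdges H.edgeSet).connectedComponentMk ((rep hcomb v : H.verts) : V)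
      = (Gt.deleteEdges H.edgeSet).connectedComponentMk v :=
  (Equiv.ofBijective _ hcomb).apply_symm_apply ((Gt.deleteEdges H.edgeSet).connectedComponentMk v)

lemma rep_coe (hcomb : IsComb Gt H) (x : H.verts) : rep hcomb ↑x = x :=
  (Equiv.ofBijective _ hcomb).symm_apply_apply x

lemma mem_tooth_rep (hcomb : IsComb Gt H) (v : V) : v ∈ tooth Gt H ↑(rep hcomb v) :=
  (SimpleGraph.ConnectedComponent.eq).mp (cc_rep hcomb v)

lemma rep_eq_of_reachable (hcomb : IsComb Gt H) {a b : V}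
    (h : (Gt.deleteEdges H.edgeSet).Reachable a b) : rep hcomb a = rep hcomb b := by
  unfold rep
  rw [SimpleGraph.ConnectedComponent.sound h]

lemma mem_tooth_iff_rep (hcomb : IsComb Gt H) (x : H.verts) (v : V) :
    v ∈ tooth Gt H ↑x ↔ rep hcomb v = x := by
  constructor
  · intro h
    have h2 : rep hcomb ↑x = rep hcomb v := rep_eq_of_reachable hcomb h
    rw [rep_coe] at h2
    exact h2.symm
  · intro h
    have := mem_tooth_rep hcomb v
    rwa [h] at this

lemma tooth_vert_eq (hcomb : IsComb Gt H) {x : H.verts} {v : V}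
    (hv : v ∈ tooth Gt H ↑x) (hvert : v ∈ H.verts) : v = ↑x := by
  have h1 : rep hcomb v = x := (mem_tooth_iff_rep hcomb x v).mp hv
  have h2 : rep hcomb v = ⟨v, hvert⟩ := rep_coe hcomb ⟨v, hvert⟩
  rw [h2] at h1
  exact congrArg Subtype.val h1

lemma adj_classify (hcomb : IsComb Gt H) (z : H.verts) {x y : V} (hadj : Gt.Adj x y)
    (hx : x ∈ tooth Gt H ↑z) (hy : y ∉ tooth Gt H ↑z) : x = ↑z := by
  by_cases he : H.Adj x y
  · exact tooth_vert_eq hcomb hx (H.edge_vert he)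
  · exfalso
    apply hy
    have hD : (Gt.deleteEdges H.edgeSet).Adj x y := by
      rw [SimpleGraph.deleteEdges_adj]
      exact ⟨hadj, fun hc => he (SimpleGraph.Subgraph.mem_edgeSet.mp hc)⟩
    exact hx.trans hD.reachable

lemma dadj_of_adj_tooth (hcomb : IsComb Gt H) (z : H.verts) {x y : V} (hadj : Gt.Adj x y)
    (hx : x ∈ tooth Gt H ↑z) (hy : y ∈ tooth Gt H ↑z) :
    (Gt.deleteEdges H.edgeSet).Adj x y := by
  by_cases he : H.Adj x y
  · exfalso
    have h1 : x = ↑z := tooth_vert_eq hcomb hx (H.edge_vert he)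
    have h2 : y = ↑z := tooth_vert_eq hcomb hy (H.edge_vert he.symm)
    rw [h1, h2] at hadj
    exact hadj.ne rfl
  · rw [SimpleGraph.deleteEdges_adj]
    exact ⟨hadj, fun hc => he (SimpleGraph.Subgraph.mem_edgeSet.mp hc)⟩

lemma rep_eq_of_dadj (hcomb : IsComb Gt H) {a b : V}
    (h : (Gt.deleteEdges H.edgeSet).Adj a b) : rep hcomb a = rep hcomb b :=
  rep_eq_of_reachable hcomb h.reachable

/-- partition of a weighted boundary sum according to teeth -/
lemma sum_partition (hcomb : IsComb Gt H) (m : V → ℝ) (A : Set V) (F : H.verts → ℝ) :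
    (∑ v : V, if v ∈ A then F (rep hcomb v) * m v else 0)
      = ∑ x : H.verts, F x * mTotal (A ∩ tooth Gt H ↑x) m := by
  unfold mTotal
  simp only [Finset.mul_sum]
  rw [Finset.sum_comm]
  refine Finset.sum_congr rfl fun v _ => ?_
  rw [Finset.sum_eq_single (rep hcomb v)]
  · have hv := mem_tooth_rep hcomb v
    by_cases hA : v ∈ A
    · rw [if_pos (Set.mem_inter hA hv), if_pos hA]
    · rw [if_neg (fun hc : v ∈ A ∩ _ => hA hc.1), mul_zero, if_neg hA]
  · intro b _ hb
    rw [if_neg, mul_zero]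
    intro hc
    exact hb ((mem_tooth_iff_rep hcomb b v).mp hc.2).symm
  · intro h
    exact absurd (Finset.mem_univ _) h

/-- the energy of the tooth-constant extension equals the energy on the subgraph -/
lemma energy_ext (hcomb : IsComb Gt H) (w : V → V → ℝ) (f : H.verts → ℝ) :
    energy Gt w (fun v => f (rep hcomb v)) = energy H.coe (fun a b => w ↑a ↑b) f := by
  unfold energy
  congr 1
  have hL : (∑ x : V, ∑ y : V, if Gt.Adj x y then
        w x y * (f (rep hcomb y) - f (rep hcomb x)) ^ 2 else 0)
      = ∑ x : V, ∑ y : V, if H.Adj x y then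
        w x y * (f (rep hcomb y) - f (rep hcomb x)) ^ 2 else 0 := by
    refine Finset.sum_congr rfl fun x _ => Finset.sum_congr rfl fun y _ => ?_
    by_cases hGt : Gt.Adj x y
    · by_cases hH : H.Adj x y
      · rw [if_pos hGt, if_pos hH]
      · rw [if_pos hGt, if_neg hH]
        have hD : (Gt.deleteEdges H.edgeSet).Adj x y := by
          rw [SimpleGraph.deleteEdges_adj]
          exact ⟨hGt, fun hc => hH (SimpleGraph.Subgraph.mem_edgeSet.mp hc)⟩
        rw [rep_eq_of_dadj hcomb hD, sub_self]
        ring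
    · rw [if_neg hGt, if_neg (fun hc => hGt (H.adj_sub hc))]
  have hR : (∑ a : H.verts, ∑ b : H.verts, if H.coe.Adj a b then
        (fun a b : H.verts => w ↑a ↑b) a b * (f b - f a) ^ 2 else 0)
      = ∑ a : H.verts, ∑ b : H.verts,
        (fun x y : V => if H.Adj x y then w x y * (f (rep hcomb y) - f (rep hcomb x)) ^ 2 else 0)
          ↑a ↑b := by
    refine Finset.sum_congr rfl fun a _ => Finset.sum_congr rfl fun b _ => ?_
    beta_reduce
    rw [rep_coe hcomb a, rep_coe hcomb b]
    simp only [SimpleGraph.Subgraph.coe_adj]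
  refine hL.trans (Eq.trans ?_ hR.symm)
  refine (double_sum_subtype _ ?_).symm
  intro x y hc
  beta_reduce
  rw [if_neg]
  intro hH
  exact hc ⟨H.edge_vert hH, H.edge_vert hH.symm⟩

end Tooth

/- ===== more small lemmas ===== -/

lemma mTotal_nonneg {m : V → ℝ} (hm : ∀ x, 0 < m x) (A : Set V) : 0 ≤ mTotal A m := by
  refine Finset.sum_nonneg fun x _ => ?_
  split_ifs
  · exact (hm x).le
  · exact le_refl 0

lemma le_mTotal {m : V → ℝ} (hm : ∀ x, 0 < m x) {A : Set V} {v : V} (hv : v ∈ A) :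
    m v ≤ mTotal A m := by
  unfold mTotal
  have h := Finset.single_le_sum (f := fun x => if x ∈ A then m x else 0)
    (fun i _ => by split_ifs; exacts [(hm i).le, le_refl 0]) (Finset.mem_univ v)
  rw [if_pos hv] at h
  exact h

lemma nonempty_of_mTotal_pos {m : V → ℝ} {A : Set V} (h : 0 < mTotal A m) :
    ∃ v, v ∈ A := by
  by_contra hc
  push_neg at hc
  have : mTotal A m = 0 := by
    unfold mTotal
    exact Finset.sum_eq_zero fun x _ => if_neg (hc x)
  rw [this] at h
  exact lt_irrefl 0 h

lemma energy_shift (G : SimpleGraph V) (w : V → V → ℝ) (v : V → ℝ) (c : ℝ) :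
    energy G w (fun x => v x + c) = energy G w v := by
  unfold energy
  congr 1
  refine Finset.sum_congr rfl fun x _ => Finset.sum_congr rfl fun y _ => ?_
  split_ifs <;> ring

lemma bInner_affine (B : Set V) (m : V → ℝ) (v : V → ℝ) (a b : ℝ) :
    bInner B m (fun z => a + b * v z) (fun z => a + b * v z)
      = a ^ 2 * bInner B m (fun _ => (1:ℝ)) (fun _ => (1:ℝ))
        + 2 * a * b * bInner B m (fun _ => 1) v + b ^ 2 * bInner B m v v := by
  unfold bInner
  rw [Finset.mul_sum, Finset.mul_sum, Finset.mul_sum, ← Finset.sum_add_distrib,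
    ← Finset.sum_add_distrib]
  refine Finset.sum_congr rfl fun z _ => ?_
  by_cases h : z ∈ B <;> simp [h] <;> ring

lemma bInner_mean_affine (B : Set V) (m : V → ℝ) (v : V → ℝ) (a b : ℝ) :
    bInner B m (fun _ => 1) (fun z => a + b * v z)
      = a * bInner B m (fun _ => (1:ℝ)) (fun _ => (1:ℝ)) + b * bInner B m (fun _ => 1) v := by
  unfold bInner
  rw [Finset.mul_sum, Finset.mul_sum, ← Finset.sum_add_distrib]
  refine Finset.sum_congr rfl fun z _ => ?_
  by_cases h : z ∈ B <;> simp [h] <;> ring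

lemma bInner_pospart (B : Set V) (m : V → ℝ) (φ : V → ℝ) :
    bInner B m φ (fun x => max (φ x) 0)
      = bInner B m (fun x => max (φ x) 0) (fun x => max (φ x) 0) := by
  unfold bInner
  refine Finset.sum_congr rfl fun x _ => ?_
  beta_reduce
  rcases le_total (φ x) 0 with h | h
  · rw [max_eq_right h]
    split_ifs <;> ring
  · rw [max_eq_left h]

section Tooth2

variable {Gt : SimpleGraph V} {H : Gt.Subgraph}

lemma lap_ext_interior (hcomb : IsComb Gt H) (m : V → ℝ) (w : V → V → ℝ)
    (f : H.verts → ℝ) {v : V} (hv : v ∉ H.verts) :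
    lap Gt m w (fun t => f (rep hcomb t)) v = 0 := by
  unfold lap
  rw [div_eq_zero_iff]
  left
  refine Finset.sum_eq_zero fun y _ => ?_
  split_ifs with hadj
  · have hD : (Gt.deleteEdges H.edgeSet).Adj v y := by
      rw [SimpleGraph.deleteEdges_adj]
      refine ⟨hadj, fun hc => hv (H.edge_vert (SimpleGraph.Subgraph.mem_edgeSet.mp hc))⟩
    beta_reduce
    rw [rep_eq_of_dadj hcomb hD, sub_self, mul_zero]
  · rfl

/-- extension by zero of a function on a tooth -/
def zext (z : H.verts) (u : ↥(tooth Gt H (↑z : V)) → ℝ) : V → ℝ :=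
  fun v => if h : v ∈ tooth Gt H (↑z : V) then u ⟨v, h⟩ else 0

lemma zext_nmem (z : H.verts) (u : ↥(tooth Gt H (↑z : V)) → ℝ) {v : V}
    (h : v ∉ tooth Gt H (↑z : V)) : zext z u v = 0 := dif_neg h

lemma zext_coe (z : H.verts) (u : ↥(tooth Gt H (↑z : V)) → ℝ) (a : ↥(tooth Gt H (↑z : V))) :
    zext z u ↑a = u a := by
  unfold zext
  rw [dif_pos a.2]

lemma energy_zext (hcomb : IsComb Gt H) (w : V → V → ℝ) (z : H.verts)
    (u : ↥(tooth Gt H (↑z : V)) → ℝ) (hz0 : zext z u ↑z = 0) :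
    energy Gt w (zext z u) = energy (toothGraph Gt H ↑z) (fun a b => w ↑a ↑b) u := by
  have hadj_iff : ∀ a b : ↥(tooth Gt H (↑z : V)), (toothGraph Gt H ↑z).Adj a b ↔
      (Gt.deleteEdges H.edgeSet).Adj ↑a ↑b := by
    intro a b
    unfold toothGraph
    simp [SimpleGraph.comap_adj]
  unfold energy
  congr 1
  have hL : (∑ x : V, ∑ y : V, if Gt.Adj x y then w x y * (zext z u y - zext z u x) ^ 2 else 0)
      = ∑ x : V, ∑ y : V,
        (fun x y : V => if x ∈ tooth Gt H (↑z : V) ∧ y ∈ tooth Gt H (↑z : V) ∧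
          (Gt.deleteEdges H.edgeSet).Adj x y
          then w x y * (zext z u y - zext z u x) ^ 2 else 0) x y := by
    refine Finset.sum_congr rfl fun x _ => Finset.sum_congr rfl fun y _ => ?_
    beta_reduce
    by_cases hGt : Gt.Adj x y
    · by_cases hx : x ∈ tooth Gt H (↑z : V)
      · by_cases hy : y ∈ tooth Gt H (↑z : V)
        · rw [if_pos hGt, if_pos ⟨hx, hy, dadj_of_adj_tooth hcomb z hGt hx hy⟩]
        · have hxz : x = ↑z := adj_classify hcomb z hGt hx hy
          rw [if_pos hGt, if_neg (fun hc => hy hc.2.1)]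
          rw [hxz, hz0, zext_nmem z u hy]
          ring
      · by_cases hy : y ∈ tooth Gt H (↑z : V)
        · have hyz : y = ↑z := adj_classify hcomb z hGt.symm hy hx
          rw [if_pos hGt, if_neg (fun hc => hx hc.1)]
          rw [hyz, hz0, zext_nmem z u hx]
          ring
        · rw [if_pos hGt, if_neg (fun hc => hx hc.1)]
          rw [zext_nmem z u hx, zext_nmem z u hy]
          ring
    · rw [if_neg hGt, if_neg (fun hc => hGt (SimpleGraph.deleteEdges_adj.mp hc.2.2).1)]
  have hR : (∑ a : ↥(tooth Gt H (↑z : V)), ∑ b : ↥(tooth Gt H (↑z : V)),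
        if (toothGraph Gt H ↑z).Adj a b then (fun a b => w ↑a ↑b) a b * (u b - u a) ^ 2 else 0)
      = ∑ a : ↥(tooth Gt H (↑z : V)), ∑ b : ↥(tooth Gt H (↑z : V)),
        (fun x y : V => if x ∈ tooth Gt H (↑z : V) ∧ y ∈ tooth Gt H (↑z : V) ∧
          (Gt.deleteEdges H.edgeSet).Adj x y
          then w x y * (zext z u y - zext z u x) ^ 2 else 0) ↑a ↑b := by
    refine Finset.sum_congr rfl fun a _ => Finset.sum_congr rfl fun b _ => ?_
    beta_reduce
    rw [zext_coe, zext_coe]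
    by_cases h : (Gt.deleteEdges H.edgeSet).Adj ↑a ↑b
    · rw [if_pos ((hadj_iff a b).mpr h), if_pos ⟨a.2, b.2, h⟩]
    · rw [if_neg (fun hc => h ((hadj_iff a b).mp hc)), if_neg (fun hc => h hc.2.2)]
  rw [hL, hR]
  refine (double_sum_subtype _ ?_).symm
  intro x y hc
  beta_reduce
  rw [if_neg]
  intro hcond
  exact hc ⟨hcond.1, hcond.2.1⟩

lemma bInner_zext (Bt : Set V) (m : V → ℝ) (z : H.verts)
    (u : ↥(tooth Gt H (↑z : V)) → ℝ) (hz0 : zext z u ↑z = 0) :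
    bInner Bt m (zext z u) (zext z u)
      = bInner (Subtype.val ⁻¹' (Bt \ {(↑z : V)})) (fun a : ↥(tooth Gt H (↑z : V)) => m ↑a) u u := by
  unfold bInner
  have hR : (∑ a : ↥(tooth Gt H (↑z : V)),
        if a ∈ Subtype.val ⁻¹' (Bt \ {(↑z : V)}) then u a * u a * m ↑a else 0)
      = ∑ a : ↥(tooth Gt H (↑z : V)),
        (fun x : V => if x ∈ Bt \ {(↑z : V)} then zext z u x * zext z u x * m x else 0) ↑a := by
    refine Finset.sum_congr rfl fun a _ => ?_
    beta_reduce
    rw [zext_coe]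
    by_cases h : (↑a : V) ∈ Bt \ {(↑z : V)}
    · rw [if_pos (Set.mem_preimage.mpr h), if_pos h]
    · rw [if_neg (fun hc => h (Set.mem_preimage.mp hc)), if_neg h]
  have hzero : ∀ x : V, x ∉ tooth Gt H (↑z : V) →
      (fun x : V => if x ∈ Bt \ {(↑z : V)} then zext z u x * zext z u x * m x else 0) x = 0 := by
    intro x hx
    beta_reduce
    rw [zext_nmem z u hx]
    split_ifs <;> ring
  rw [hR, single_sum_subtype _ hzero]
  refine Finset.sum_congr rfl fun x _ => ?_
  beta_reduce
  by_cases hxz : x = (↑z : V)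
  · subst hxz
    have hne : (↑z : V) ∉ Bt \ ({(↑z : V)} : Set V) := fun hc => hc.2 rfl
    rw [if_neg hne, hz0]
    split_ifs <;> ring
  · by_cases hxBt : x ∈ Bt
    · have hmem : x ∈ Bt \ ({(↑z : V)} : Set V) := ⟨hxBt, fun hc => hxz hc⟩
      rw [if_pos hxBt, if_pos hmem]
    · have hne : x ∉ Bt \ ({(↑z : V)} : Set V) := fun hc => hxBt hc.1
      rw [if_neg hxBt, if_neg hne]

lemma ebil_zext_cross (hcomb : IsComb Gt H) (w : V → V → ℝ) (z : H.verts)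
    (u : ↥(tooth Gt H (↑z : V)) → ℝ) (hz0 : zext z u ↑z = 0) {g : V → ℝ}
    (hg : ∀ v ∈ tooth Gt H (↑z : V), g v = 0) :
    ebil Gt w (zext z u) g = 0 := by
  unfold ebil
  rw [div_eq_zero_iff]
  left
  refine Finset.sum_eq_zero fun x _ => Finset.sum_eq_zero fun y _ => ?_
  split_ifs with hGt
  · have hprod : (zext z u y - zext z u x) * (g y - g x) = 0 := by
      by_cases hx : x ∈ tooth Gt H (↑z : V)
      · by_cases hy : y ∈ tooth Gt H (↑z : V)
        · rw [hg x hx, hg y hy, sub_self, mul_zero]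
        · have hxz : x = ↑z := adj_classify hcomb z hGt hx hy
          rw [hxz, hz0, zext_nmem z u hy, sub_self, zero_mul]
      · by_cases hy : y ∈ tooth Gt H (↑z : V)
        · have hyz : y = ↑z := adj_classify hcomb z hGt.symm hy hx
          rw [hyz, hz0, zext_nmem z u hx, sub_self, zero_mul]
        · rw [zext_nmem z u hx, zext_nmem z u hy, sub_self, zero_mul]
    rw [mul_assoc, hprod, mul_zero]
  · rfl

lemma bInner_zext_cross (Bt : Set V) (m : V → ℝ) (z : H.verts)
    (u : ↥(tooth Gt H (↑z : V)) → ℝ) {g : V → ℝ}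
    (hg : ∀ v ∈ tooth Gt H (↑z : V), g v = 0) :
    bInner Bt m (zext z u) g = 0 := by
  unfold bInner
  refine Finset.sum_eq_zero fun x _ => ?_
  split_ifs with hx
  · by_cases hxt : x ∈ tooth Gt H (↑z : V)
    · rw [hg x hxt]
      ring
    · rw [zext_nmem z u hxt]
      ring
  · rfl

end Tooth2

/-- The core rigidity computation: for every eigenfunction `f` of `σ₂` on the subgraph,
the tooth-constant extension is an eigenfunction on the big graph, and the boundary
measures of teeth at interior vertices are annihilated by `f`. -/
lemma key {Gt : SimpleGraph V} {Bt : Set V} {m : V → ℝ} {w : V → V → ℝ}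
    (hm : ∀ x, 0 < m x) (hw_symm : ∀ x y, w x y = w y x)
    (hw_pos : ∀ x y, Gt.Adj x y → 0 < w x y)
    {H : Gt.Subgraph} (hGcon : H.coe.Connected) {B : Set V}
    (hcomb : IsComb Gt H)
    (hmeas : ∀ x ∈ B, m x ≤ mTotal (Bt ∩ tooth Gt H x) m)
    (hsigma2 : steklov Gt Bt m w 2 = steklovSub Gt H B m w 2)
    {x₀ : H.verts} (hx₀ : (↑x₀ : V) ∈ B)
    (hσpos : 0 < steklovSub Gt H B m w 2)
    {f : H.verts → ℝ}
    (hf : IsSteklovEigenfun H.coe (Subtype.val ⁻¹' B) (fun a => m ↑a) (fun a b => w ↑a ↑b)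
      (steklovSub Gt H B m w 2) f) :
    (∀ y : H.verts, (↑y : V) ∉ B → f y * f y * mTotal (Bt ∩ tooth Gt H ↑y) m = 0) ∧
    (∀ v : V, v ∉ Bt → lap Gt m w (fun t => f (rep hcomb t)) v = 0) ∧
    (∀ v ∈ Bt, - lap Gt m w (fun t => f (rep hcomb t)) v
        = steklovSub Gt H B m w 2 * f (rep hcomb v)) := by
  have hw0 : ∀ x y, Gt.Adj x y → 0 ≤ w x y := fun x y h => (hw_pos x y h).le
  have hm' : ∀ a : H.verts, 0 < m ↑a := fun a => hm ↑a
  have hw_symm' : ∀ a b : H.verts, w ↑a ↑b = w ↑b ↑a := fun a b => hw_symm ↑a ↑b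
  have hw_pos' : ∀ a b : H.verts, H.coe.Adj a b → 0 < w ↑a ↑b := by
    intro a b h
    rw [SimpleGraph.Subgraph.coe_adj] at h
    exact hw_pos _ _ (H.adj_sub h)
  have hx₀' : x₀ ∈ Subtype.val ⁻¹' B := hx₀
  obtain ⟨hmeanf, hEf, hfB⟩ :=
    eigen_facts hw_symm' hm' hw_pos' hGcon hx₀' hσpos hf
  set T : H.verts → ℝ := fun x => mTotal (Bt ∩ tooth Gt H ↑x) m with hTdef
  have hT0 : ∀ x : H.verts, 0 ≤ T x := fun x => mTotal_nonneg hm _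
  have hTB : ∀ x : H.verts, (↑x : V) ∈ B → m ↑x ≤ T x := fun x hx => hmeas ↑x hx
  have hSTpos : 0 < ∑ x : H.verts, T x := by
    have h1 : m ↑x₀ ≤ T x₀ := hTB x₀ hx₀
    have h2 : T x₀ ≤ ∑ x : H.verts, T x :=
      Finset.single_le_sum (fun i _ => hT0 i) (Finset.mem_univ x₀)
    linarith [hm ↑x₀]
  set c : ℝ := (∑ x : H.verts, f x * T x) / (∑ x : H.verts, T x) with hcdef
  set f' : H.verts → ℝ := fun x => -c + 1 * f x with hf'def
  set u : V → ℝ := fun t => f' (rep hcomb t) with hudef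
  set σ2 := steklovSub Gt H B m w 2 with hσ2def
  -- mean of u on Bt vanishes
  have hmean_u : bInner Bt m (fun _ => 1) u = 0 := by
    have h := sum_partition hcomb m Bt f'
    beta_reduce at h
    have h2 : bInner Bt m (fun _ => 1) u
        = ∑ v : V, if v ∈ Bt then f' (rep hcomb v) * m v else 0 := by
      unfold bInner
      refine Finset.sum_congr rfl fun v _ => ?_
      split_ifs
      · simp only [hudef, one_mul]
      · rfl
    rw [h2, h]
    have hsplit : (∑ x : H.verts, f' x * T x)
        = (∑ x : H.verts, f x * T x) - c * (∑ x : H.verts, T x) := by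
      rw [Finset.mul_sum, ← Finset.sum_sub_distrib]
      refine Finset.sum_congr rfl fun x _ => ?_
      simp only [hf'def]
      ring
    rw [hsplit, hcdef]
    field_simp
    ring
  -- energy of u
  have hq_u : energy Gt w u
      = σ2 * bInner (Subtype.val ⁻¹' B) (fun a : H.verts => m ↑a) f f := by
    have h1 : energy Gt w u = energy H.coe (fun a b : H.verts => w ↑a ↑b) f' :=
      energy_ext hcomb w f'
    have h2 : energy H.coe (fun a b : H.verts => w ↑a ↑b) f'
        = energy H.coe (fun a b : H.verts => w ↑a ↑b) f := by
      have e : f' = fun x => f x + (-c) := by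
        funext x
        simp only [hf'def]
        ring
      rw [e]
      exact energy_shift _ _ f (-c)
    rw [h1, h2, hEf]
  -- boundary norm of u
  have hp_u : bInner Bt m u u = ∑ x : H.verts, f' x * f' x * T x := by
    have h := sum_partition hcomb m Bt (fun x => f' x * f' x)
    beta_reduce at h
    have h2 : bInner Bt m u u
        = ∑ v : V, if v ∈ Bt then f' (rep hcomb v) * f' (rep hcomb v) * m v else 0 := by
      unfold bInner
      refine Finset.sum_congr rfl fun v _ => ?_
      split_ifs
      · simp only [hudef]
      · rfl
    rw [h2, h]
  set pΓ := bInner (Subtype.val ⁻¹' B) (fun a : H.verts => m ↑a) f f with hpΓdef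
  set mB' := bInner (Subtype.val ⁻¹' B) (fun a : H.verts => m ↑a)
    (fun _ => (1:ℝ)) (fun _ => (1:ℝ)) with hmB'def
  have hmB'pos : 0 < mB' := bInner_pos hm' hx₀' one_ne_zero
  obtain ⟨a₁, ha₁, hfa₁⟩ := hfB
  have hpΓpos : 0 < pΓ := bInner_pos hm' ha₁ hfa₁
  have hS2 : bInner (Subtype.val ⁻¹' B) (fun a : H.verts => m ↑a) f' f'
      = pΓ + c ^ 2 * mB' := by
    have h := bInner_affine (Subtype.val ⁻¹' B) (fun a : H.verts => m ↑a) f (-c) 1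
    rw [hmeanf] at h
    have h' : bInner (Subtype.val ⁻¹' B) (fun a : H.verts => m ↑a) f' f'
        = (-c) ^ 2 * mB' + 2 * (-c) * 1 * 0 + 1 ^ 2 * pΓ := h
    rw [h']
    ring
  have hcompare : pΓ + c ^ 2 * mB' ≤ ∑ x : H.verts, f' x * f' x * T x := by
    rw [← hS2]
    unfold bInner
    refine Finset.sum_le_sum fun x _ => ?_
    split_ifs with hxB
    · have h1 := hTB x hxB
      nlinarith [mul_self_nonneg (f' x)]
    · exact mul_nonneg (mul_self_nonneg _) (hT0 x)
  have hσt0 : 0 ≤ steklov Gt Bt m w 2 := by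
    rw [hsigma2]
    exact hσpos.le
  have hvar : ∀ v : V → ℝ, bInner Bt m (fun _ => 1) v = 0 →
      σ2 * bInner Bt m v v ≤ energy Gt w v := by
    intro v hv
    have h := steklov2_le hm hw0 hσt0 hv
    rwa [hsigma2] at h
  have hchain := hvar u hmean_u
  rw [hq_u, hp_u] at hchain
  have hc0 : c = 0 := by
    have h1 : σ2 * (pΓ + c ^ 2 * mB') ≤ σ2 * (∑ x : H.verts, f' x * f' x * T x) :=
      mul_le_mul_of_nonneg_left hcompare hσpos.le
    have h2 : c ^ 2 * mB' ≤ 0 := by nlinarith [hσpos]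
    have h3 : c ^ 2 ≤ 0 := by nlinarith [hmB'pos]
    have h4 : c ^ 2 = 0 := le_antisymm h3 (sq_nonneg c)
    exact (pow_eq_zero_iff (by norm_num)).mp h4
  have hSeqq : (∑ x : H.verts, f' x * f' x * T x) = pΓ := by
    have h3 : pΓ ≤ ∑ x : H.verts, f' x * f' x * T x := by
      have := hcompare
      rw [hc0] at this
      nlinarith [this]
    have h4 : (∑ x : H.verts, f' x * f' x * T x) ≤ pΓ := by
      have := hchain
      nlinarith [hσpos]
    linarith
  -- K1
  have hK1 : ∀ y : H.verts, (↑y : V) ∉ B → f y * f y * T y = 0 := by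
    have hS2' : (∑ x : H.verts, if x ∈ Subtype.val ⁻¹' B then f' x * f' x * m ↑x else 0)
        = pΓ := by
      have h : bInner (Subtype.val ⁻¹' B) (fun a : H.verts => m ↑a) f' f' = pΓ := by
        rw [hS2, hc0]
        ring
      rw [← h]
      rfl
    have hzero : (∑ x : H.verts, (f' x * f' x * T x
        - if x ∈ Subtype.val ⁻¹' B then f' x * f' x * m ↑x else 0)) = 0 := by
      rw [Finset.sum_sub_distrib, hSeqq, hS2']
      ring
    have hnn : ∀ i ∈ Finset.univ (α := H.verts), 0 ≤ f' i * f' i * T i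
        - (if i ∈ Subtype.val ⁻¹' B then f' i * f' i * m ↑i else 0) := by
      intro x _
      split_ifs with hxB
      · have h1 := hTB x hxB
        nlinarith [mul_self_nonneg (f' x)]
      · have := mul_nonneg (mul_self_nonneg (f' x)) (hT0 x)
        linarith
    have hterms := (Finset.sum_eq_zero_iff_of_nonneg hnn).mp hzero
    intro y hy
    have ht := hterms y (Finset.mem_univ y)
    beta_reduce at ht
    have hy' : y ∉ Subtype.val ⁻¹' B := fun hc => hy hc
    rw [if_neg hy', sub_zero] at ht
    have hfy : f' y = f y := by
      simp only [hf'def]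
      rw [hc0]
      ring
    rw [hfy] at ht
    exact ht
  -- K3
  have hTx₀pos : 0 < T x₀ := lt_of_lt_of_le (hm ↑x₀) (hTB x₀ hx₀)
  obtain ⟨b₀, hb₀⟩ := nonempty_of_mTotal_pos hTx₀pos
  have hueq : energy Gt w u = σ2 * bInner Bt m u u := by
    rw [hq_u, hp_u, hSeqq]
  have heigen := minimizer_eigen hw_symm hm hb₀.1 hvar hmean_u hueq
  have huf : u = fun t => f (rep hcomb t) := by
    funext t
    simp only [hudef, hf'def]
    rw [hc0]
    ring
  rw [huf] at heigen
  exact ⟨hK1, heigen.1, heigen.2⟩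

/-- The tooth estimate: given a positive-somewhere eigenfunction of the big graph vanishing
on the tooth at `z`, the mixed Steklov--Dirichlet problem on the tooth is bounded below. -/
lemma part3_aux {Gt : SimpleGraph V} {Bt : Set V} {m : V → ℝ} {w : V → V → ℝ}
    (hm : ∀ x, 0 < m x) (hw_symm : ∀ x y, w x y = w y x)
    (hw_pos : ∀ x y, Gt.Adj x y → 0 < w x y)
    {H : Gt.Subgraph} (hcomb : IsComb Gt H) (z : H.verts) {σ : ℝ} (hσ0 : 0 ≤ σ)
    (hsig : steklov Gt Bt m w 2 = σ)
    {ψ : V → ℝ}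
    (hψΩ : ∀ v, v ∉ Bt → lap Gt m w ψ v = 0)
    (hψB : ∀ v ∈ Bt, - lap Gt m w ψ v = σ * ψ v)
    (hψt : ∀ v ∈ tooth Gt H (↑z : V), ψ v = 0)
    {x₁ : V} (hx₁Bt : x₁ ∈ Bt) (hψx₁ : 0 < ψ x₁)
    (u : ↥(tooth Gt H (↑z : V)) → ℝ)
    (hz0 : zext z u (↑z : V) = 0) :
    σ * bInner (Subtype.val ⁻¹' (Bt \ {(↑z : V)}))
        (fun a : ↥(tooth Gt H (↑z : V)) => m ↑a) u u
      ≤ energy (toothGraph Gt H ↑z) (fun a b => w ↑a ↑b) u := by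
  have hw0 : ∀ x y, Gt.Adj x y → 0 ≤ w x y := fun x y h => (hw_pos x y h).le
  set g : V → ℝ := fun v => max (ψ v) 0 with hgdef
  have hgt : ∀ v ∈ tooth Gt H (↑z : V), g v = 0 := by
    intro v hv
    simp only [hgdef]
    rw [hψt v hv, max_self]
  have hmean_g : 0 < bInner Bt m (fun _ => 1) g := by
    unfold bInner
    have hterm := Finset.single_le_sum
      (f := fun x => if x ∈ Bt then (1:ℝ) * g x * m x else 0)
      (fun i _ => by
        split_ifs
        · have hgnn : 0 ≤ g i := le_max_right _ _
          have := (hm i).le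
          positivity
        · exact le_refl 0) (Finset.mem_univ x₁)
    rw [if_pos hx₁Bt] at hterm
    have hgx : g x₁ = ψ x₁ := max_eq_left hψx₁.le
    have hpos : (0:ℝ) < 1 * g x₁ * m x₁ := by
      rw [hgx]
      have := hm x₁
      nlinarith
    calc (0:ℝ) < 1 * g x₁ * m x₁ := hpos
      _ ≤ _ := hterm
  have hqg : energy Gt w g ≤ σ * bInner Bt m g g := by
    have h1 : energy Gt w g ≤ ebil Gt w ψ g := pos_part_energy hw0 ψ
    have h2 : ebil Gt w ψ g = σ * bInner Bt m ψ g :=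
      eigen_green hw_symm (fun x => (hm x).ne') hψΩ hψB g
    have h3 : bInner Bt m ψ g = bInner Bt m g g := bInner_pospart Bt m ψ
    rw [h2, h3] at h1
    exact h1
  set a : ℝ := -(bInner Bt m (fun _ => 1) (zext z u)) / (bInner Bt m (fun _ => 1) g)
    with hadef
  have hmean_v : bInner Bt m (fun _ => 1) (fun t => zext z u t + a * g t) = 0 := by
    rw [bInner_add_right]
    have hcanc : a * bInner Bt m (fun _ => 1) g
        = -(bInner Bt m (fun _ => 1) (zext z u)) := by
      rw [hadef]
      exact div_mul_cancel₀ _ hmean_g.ne'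
    rw [hcanc]
    ring
  have hσt0 : 0 ≤ steklov Gt Bt m w 2 := by
    rw [hsig]
    exact hσ0
  have h1 := steklov2_le hm hw0 hσt0 hmean_v
  rw [hsig] at h1
  rw [energy_expand, bInner_expand] at h1
  rw [ebil_zext_cross hcomb w z u hz0 hgt, bInner_zext_cross Bt m z u hgt] at h1
  have h2 := mul_le_mul_of_nonneg_left hqg (sq_nonneg a)
  have hfin : σ * bInner Bt m (zext z u) (zext z u) ≤ energy Gt w (zext z u) := by
    nlinarith [h1, h2]
  rw [energy_zext hcomb w z u hz0, bInner_zext Bt m z u hz0] at hfin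
  exact hfin

end

end YYAux
/-- **Theorem 1.10 (rigidity for the first positive eigenvalue).**
Under the hypotheses of the monotonicity theorem with `|B| ≥ 2`, if
`σ₂(G̃) = σ₂(G)` and `Z₁ ⊆ Ω`, then: (1) `B̃_x = {x}` for every `x ∈ B`;
(2) `B̃_y = ∅` for every interior `y ∉ Z₁`; and (3) for every `z ∈ Z₁`,
`λ₁(G̃_z, B̃_z ∖ {z}, {z}) ≥ σ₂(G)`. -/
theorem steklov_rigidity_sigma2
    {V : Type*} [Fintype V] (Gt : SimpleGraph V) (Bt : Set V)
    (m : V → ℝ) (w : V → V → ℝ)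
    (hm : ∀ x, 0 < m x)
    (hw_symm : ∀ x y, w x y = w y x)
    (hw_pos : ∀ x y, Gt.Adj x y → 0 < w x y)
    (hGt : Gt.Connected)
    (H : Gt.Subgraph) (hG : H.coe.Connected)
    (B : Set V) (hB : B ⊆ H.verts) (hB2 : 2 ≤ B.ncard)
    (hcomb : IsComb Gt H)
    (hmeas : ∀ x ∈ B, m x ≤ mTotal (Bt ∩ tooth Gt H x) m)
    (hsigma2 : steklov Gt Bt m w 2 = steklovSub Gt H B m w 2)
    (hZ1 : ∀ x ∈ Z1set Gt H B m w, (x : V) ∉ B) :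
    (∀ x ∈ B, Bt ∩ tooth Gt H x = {x}) ∧
    (∀ y : H.verts, (y : V) ∉ B → y ∉ Z1set Gt H B m w →
      Bt ∩ tooth Gt H (y : V) = ∅) ∧
    (∀ z : H.verts, z ∈ Z1set Gt H B m w →
      lambda1Ge (toothGraph Gt H (z : V))
        (Subtype.val ⁻¹' (Bt \ {(z : V)})) (Subtype.val ⁻¹' {(z : V)})
        (fun a => m a.1) (fun a b => w a.1 b.1)
        (steklovSub Gt H B m w 2)) := by
  classical
  -- two distinct boundary vertices
  obtain ⟨xb, yb, hxbB, hybB, hxyb⟩ := (Set.one_lt_ncard_iff B.toFinite).mp (by omega)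
  have hm' : ∀ a : H.verts, 0 < m ↑a := fun a => hm ↑a
  have hw_symm' : ∀ a b : H.verts, w ↑a ↑b = w ↑b ↑a := fun a b => hw_symm ↑a ↑b
  have hw_pos' : ∀ a b : H.verts, H.coe.Adj a b → 0 < w ↑a ↑b := by
    intro a b h
    rw [SimpleGraph.Subgraph.coe_adj] at h
    exact hw_pos _ _ (H.adj_sub h)
  have hw0' : ∀ a b : H.verts, H.coe.Adj a b → 0 ≤ w ↑a ↑b :=
    fun a b h => (hw_pos' a b h).le
  have hx₀V : xb ∈ H.verts := hB hxbB
  have hy₀V : yb ∈ H.verts := hB hybB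
  have hx₀' : (⟨xb, hx₀V⟩ : H.verts) ∈ Subtype.val ⁻¹' B := hxbB
  have hy₀' : (⟨yb, hy₀V⟩ : H.verts) ∈ Subtype.val ⁻¹' B := hybB
  have hx₀y₀ : (⟨xb, hx₀V⟩ : H.verts) ≠ ⟨yb, hy₀V⟩ :=
    fun h => hxyb (congrArg Subtype.val h)
  -- positivity of σ₂ on the subgraph
  obtain ⟨μ, hμpos, hμ⟩ :=
    YYAux.exists_pos_lower_bound (G := H.coe) (w := fun a b : H.verts => w ↑a ↑b)
      hG hm' hw_pos' hx₀' hy₀' hx₀y₀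
  have hσpos : 0 < steklovSub Gt H B m w 2 := by
    have hle : μ ≤ steklov H.coe (Subtype.val ⁻¹' B)
        (fun a : H.verts => m ↑a) (fun a b : H.verts => w ↑a ↑b) 2 :=
      YYAux.le_steklov2 hm' hw0' hx₀' hy₀' hx₀y₀ (fun v hv _ => hμ v hv)
    exact lt_of_lt_of_le hμpos hle
  -- extraction of eigenfunctions from non-membership in Z₁
  have hexists : ∀ x' : H.verts, x' ∉ Z1set Gt H B m w → ∃ f : H.verts → ℝ,
      IsSteklovEigenfun H.coe (Subtype.val ⁻¹' B) (fun a => m a.1) (fun a b => w a.1 b.1)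
        (steklovSub Gt H B m w 2) f ∧ f x' ≠ 0 := by
    intro x' hx'
    unfold Z1set at hx'
    rw [Set.mem_setOf_eq] at hx'
    push_neg at hx'
    exact hx'
  -- Part 1
  have part1 : ∀ x ∈ B, Bt ∩ tooth Gt H x = {x} := by
    intro x hxB
    have hxV : x ∈ H.verts := hB hxB
    have hnotZ : (⟨x, hxV⟩ : H.verts) ∉ Z1set Gt H B m w :=
      fun hmem => hZ1 ⟨x, hxV⟩ hmem hxB
    obtain ⟨f, hfe, hfx⟩ := hexists ⟨x, hxV⟩ hnotZ
    obtain ⟨hK1, hKΩ, hKB⟩ := YYAux.key hm hw_symm hw_pos hG hcomb hmeas hsigma2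
      (x₀ := ⟨x, hxV⟩) hxB hσpos hfe
    have hall : ∀ v ∈ Bt ∩ tooth Gt H x, v = x := by
      intro v hv
      by_contra hne
      have hvt : v ∈ tooth Gt H ((⟨x, hxV⟩ : H.verts) : V) := hv.2
      have hvnv : v ∉ H.verts := by
        intro hvert
        exact hne (YYAux.tooth_vert_eq hcomb hvt hvert)
      have hlap0 : lap Gt m w (fun t => f (YYAux.rep hcomb t)) v = 0 :=
        YYAux.lap_ext_interior hcomb m w f hvnv
      have heq := hKB v hv.1
      rw [hlap0] at heq
      have hrepv : YYAux.rep hcomb v = ⟨x, hxV⟩ :=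
        (YYAux.mem_tooth_iff_rep hcomb ⟨x, hxV⟩ v).mp hvt
      rw [hrepv] at heq
      have hprod : steklovSub Gt H B m w 2 * f ⟨x, hxV⟩ = 0 := by linarith [heq]
      rcases mul_eq_zero.mp hprod with h | h
      · exact absurd h hσpos.ne'
      · exact hfx h
    have hTpos : 0 < mTotal (Bt ∩ tooth Gt H x) m :=
      lt_of_lt_of_le (hm x) (hmeas x hxB)
    obtain ⟨v₀, hv₀⟩ := YYAux.nonempty_of_mTotal_pos hTpos
    have hxBt : x ∈ Bt ∩ tooth Gt H x := by
      have h := hall v₀ hv₀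
      rwa [h] at hv₀
    ext v
    constructor
    · intro hv
      exact hall v hv
    · intro hv
      rw [Set.mem_singleton_iff] at hv
      rw [hv]
      exact hxBt
  -- Part 2
  have part2 : ∀ y : H.verts, (↑y : V) ∉ B → y ∉ Z1set Gt H B m w →
      Bt ∩ tooth Gt H (↑y : V) = ∅ := by
    intro y hyB hyZ
    obtain ⟨f, hfe, hfy⟩ := hexists y hyZ
    obtain ⟨hK1, _, _⟩ := YYAux.key hm hw_symm hw_pos hG hcomb hmeas hsigma2
      (x₀ := ⟨xb, hx₀V⟩) hxbB hσpos hfe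
    have h1 := hK1 y hyB
    have hT0 : mTotal (Bt ∩ tooth Gt H ↑y) m = 0 := by
      rcases mul_eq_zero.mp h1 with h | h
      · exact absurd (mul_self_eq_zero.mp h) hfy
      · exact h
    rw [Set.eq_empty_iff_forall_notMem]
    intro v hv
    have h2 := YYAux.le_mTotal hm hv
    rw [hT0] at h2
    linarith [hm v]
  refine ⟨part1, part2, ?_⟩
  -- Part 3
  intro z hz
  have hnotZ : (⟨xb, hx₀V⟩ : H.verts) ∉ Z1set Gt H B m w :=
    fun hmem => hZ1 ⟨xb, hx₀V⟩ hmem hxbB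
  obtain ⟨f, hfe, hfx⟩ := hexists ⟨xb, hx₀V⟩ hnotZ
  obtain ⟨_, hKΩ, hKB⟩ := YYAux.key hm hw_symm hw_pos hG hcomb hmeas hsigma2
    (x₀ := ⟨xb, hx₀V⟩) hxbB hσpos hfe
  have hfz : f z = 0 := hz f hfe
  have hφt : ∀ v ∈ tooth Gt H (↑z : V), f (YYAux.rep hcomb v) = 0 := by
    intro v hv
    rw [(YYAux.mem_tooth_iff_rep hcomb z v).mp hv, hfz]
  have hxBt : (xb : V) ∈ Bt := by
    have h := part1 xb hxbB
    have hmem : xb ∈ Bt ∩ tooth Gt H xb := by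
      rw [h]
      rfl
    exact hmem.1
  have hφx : f (YYAux.rep hcomb xb) ≠ 0 := by
    have hrep : YYAux.rep hcomb xb = ⟨xb, hx₀V⟩ := YYAux.rep_coe hcomb ⟨xb, hx₀V⟩
    rw [hrep]
    exact hfx
  unfold lambda1Ge
  intro u hu
  have hztooth : (↑z : V) ∈ tooth Gt H (↑z : V) := SimpleGraph.Reachable.refl _
  have hz0 : YYAux.zext z u (↑z : V) = 0 := by
    unfold YYAux.zext
    rw [dif_pos hztooth]
    exact hu ⟨(↑z : V), hztooth⟩ rfl
  rcases lt_or_gt_of_ne hφx with hneg | hpos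
  · -- use ψ := -φ
    have hψΩ : ∀ v, v ∉ Bt → lap Gt m w (fun t => -(f (YYAux.rep hcomb t))) v = 0 := by
      intro v hv
      rw [YYAux.lap_neg Gt m w (fun t => f (YYAux.rep hcomb t)) v, hKΩ v hv, neg_zero]
    have hψB : ∀ v ∈ Bt, - lap Gt m w (fun t => -(f (YYAux.rep hcomb t))) v
        = steklovSub Gt H B m w 2 * -(f (YYAux.rep hcomb v)) := by
      intro v hv
      have h1 := hKB v hv
      rw [YYAux.lap_neg Gt m w (fun t => f (YYAux.rep hcomb t)) v, neg_neg]
      have h2 : steklovSub Gt H B m w 2 * -(f (YYAux.rep hcomb v))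
          = -(steklovSub Gt H B m w 2 * f (YYAux.rep hcomb v)) := by ring
      rw [h2, ← h1]
      ring
    have hψt : ∀ v ∈ tooth Gt H (↑z : V), -(f (YYAux.rep hcomb v)) = 0 := by
      intro v hv
      rw [hφt v hv, neg_zero]
    have hψpos : 0 < -(f (YYAux.rep hcomb xb)) := by linarith [hneg]
    exact YYAux.part3_aux hm hw_symm hw_pos hcomb z hσpos.le hsigma2
      hψΩ hψB hψt hxBt hψpos u hz0
  · exact YYAux.part3_aux hm hw_symm hw_pos hcomb z hσpos.le hsigma2
      hKΩ hKB hφt hxBt hpos u hz0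
end
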